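/- arXiv:1603.09589 — 6 statements merged into one kernel-verified Lean document; each statement's English description precedes it below -/
import Mathlib

section
/- For any partition λ, the rank-generating function R(λ,q) := Σ_{μ ⊆ λ} q^{|μ|} of the interval [∅,λ] in Young's lattice satisfies R(λ,q) = Σ_{x=(i,j)} q^{i(j-1)} · R(λ_(x),q) · R(λ^(x),q), where x runs over the outside corner cells of λ, λ_(x) = (λ_{i+1}, λ_{i+2}, …) and λ^(x) = (λ_1 − j, λ_2 − j, …, λ_{i−1} − j). -/
open scoped BigOperators

/-- The rank-generating function `R(λ,q) = Σ_{μ ⊆ λ} q^{|μ|}` of the interval `[∅,λ]`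
in Young's lattice, where a partition is encoded as an antitone function `ℕ → ℕ`
(0-indexed row lengths) and `μ ⊆ λ` means pointwise `≤`. -/
noncomputable def rankGen (p : ℕ → ℕ) (q : ℚ) : ℚ :=
  ∑ᶠ m ∈ {m : ℕ → ℕ | Antitone m ∧ ∀ i, m i ≤ p i}, q ^ (∑ᶠ i, m i)

/-!
Every `μ ⊆ λ` has a first row `r` in which it agrees with `λ`; then `(r, λ_r)` is an outside
corner of `λ`, since `λ_r = μ_r ≤ μ_{r-1} < λ_{r-1}`. Grouping the `μ` by this corner, `μ` consists
of the `(r+1) × λ_r` rectangle, a partition `ν ⊆ λ_(x)` below row `r`, and a partition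
`τ ⊆ λ^(x)` to the right of the rectangle; this is a bijection, and `|μ| = (r+1)λ_r + |ν| + |τ|`.
-/

open Function Set

def partitionsBelow (p : ℕ → ℕ) : Set (ℕ → ℕ) := {m | Antitone m ∧ ∀ i, m i ≤ p i}

def outsideCornerRows (p : ℕ → ℕ) : Set ℕ := {r | r = 0 ∨ p r < p (r - 1)}

def belowCorner (p : ℕ → ℕ) (r : ℕ) : ℕ → ℕ := fun k => p (k + r + 1)

def aboveRightOfCorner (p : ℕ → ℕ) (r : ℕ) : ℕ → ℕ :=
  fun k => if k < r then p k - (p r + 1) else 0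

def cornerFiber (p : ℕ → ℕ) (r : ℕ) : Set (ℕ → ℕ) :=
  {m ∈ partitionsBelow p | m r = p r ∧ ∀ k < r, m k < p k}

def splitAt (r c : ℕ) (m : ℕ → ℕ) : (ℕ → ℕ) × (ℕ → ℕ) :=
  (fun k => m (k + r + 1), fun k => if k < r then m k - c else 0)

def joinAt (r c : ℕ) (x : (ℕ → ℕ) × (ℕ → ℕ)) : ℕ → ℕ :=
  fun k => if k < r then c + x.2 k else if k = r then c else x.1 (k - (r + 1))

lemma rankGen_eq_finsum_partitionsBelow (p : ℕ → ℕ) (q : ℚ) :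
    rankGen p q = ∑ᶠ m ∈ partitionsBelow p, q ^ ∑ᶠ i, m i :=
  rfl

lemma setOf_forall_le_finite {p : ℕ → ℕ} (hfin : (support p).Finite) :
    {m : ℕ → ℕ | ∀ i, m i ≤ p i}.Finite := by
  refine Set.Finite.of_finite_image (f := fun m (i : hfin.toFinset) => m i) ?_ ?_
  · refine (Set.Finite.pi (ι := hfin.toFinset) fun i => Set.finite_Iic (p i)).subset ?_
    rintro _ ⟨m, hm, rfl⟩ i -
    exact hm i
  · intro m hm m' hm' h
    funext i
    by_cases hi : p i = 0
    · have := hm i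
      have := hm' i
      omega
    · exact congrFun h ⟨i, by simpa using hi⟩

lemma partitionsBelow_finite {p : ℕ → ℕ} (hfin : (support p).Finite) :
    (partitionsBelow p).Finite :=
  (setOf_forall_le_finite hfin).subset fun _ hm => hm.2

lemma support_finite_of_mem_partitionsBelow {p m : ℕ → ℕ} (hfin : (support p).Finite)
    (hm : m ∈ partitionsBelow p) : (support m).Finite :=
  hfin.subset fun i hi hpi => hi (Nat.le_zero.mp (hpi ▸ hm.2 i))

lemma outsideCornerRows_finite {p : ℕ → ℕ} (hfin : (support p).Finite) :
    (outsideCornerRows p).Finite := by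
  refine ((hfin.image (· + 1)).insert 0).subset ?_
  rintro (_ | r) (h | h)
  · exact Or.inl rfl
  · exact Or.inl rfl
  · simp at h
  · rw [Nat.add_sub_cancel] at h
    exact Or.inr ⟨r, by rw [mem_support]; omega, rfl⟩

lemma mem_outsideCornerRows_of_mem_cornerFiber {p m : ℕ → ℕ} {r : ℕ}
    (hm : m ∈ cornerFiber p r) : r ∈ outsideCornerRows p := by
  obtain ⟨⟨hanti, -⟩, hr, hlt⟩ := hm
  rcases Nat.eq_zero_or_pos r with h | h
  · exact Or.inl h
  · have := hanti (Nat.sub_le r 1)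
    have := hlt (r - 1) (by omega)
    exact Or.inr (by omega)

lemma partitionsBelow_eq_biUnion_cornerFiber {p : ℕ → ℕ} (h0 : ∃ n, p n = 0) :
    partitionsBelow p = ⋃ r ∈ outsideCornerRows p, cornerFiber p r := by
  classical
  ext m
  simp only [mem_iUnion₂, exists_prop]
  constructor
  · intro hm
    have hex : ∃ r, m r = p r := h0.imp fun n hn => by have := hm.2 n; omega
    have hfib : m ∈ cornerFiber p (Nat.find hex) :=
      ⟨hm, Nat.find_spec hex, fun k hk => (hm.2 k).lt_of_ne (Nat.find_min hex hk)⟩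
    exact ⟨_, mem_outsideCornerRows_of_mem_cornerFiber hfib, hfib⟩
  · rintro ⟨r, -, hm, -⟩
    exact hm

lemma pairwise_disjoint_cornerFiber (p : ℕ → ℕ) : Pairwise (Disjoint on cornerFiber p) := by
  intro r r' hne
  refine Set.disjoint_left.mpr fun m hm hm' => ?_
  rcases hne.lt_or_gt with h | h
  · exact (hm'.2.2 r h).ne hm.2.1
  · exact (hm.2.2 r' h).ne hm'.2.1

lemma finsum_eq_sum_range_add_finsum_add {M : Type*} [AddCommMonoid M] {f : ℕ → M}
    (hf : (support f).Finite) (n : ℕ) :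
    ∑ᶠ k, f k = ∑ k ∈ Finset.range n, f k + ∑ᶠ k, f (k + n) := by
  obtain ⟨N, hN⟩ := hf.bddAbove
  have hf' : ∑ᶠ k, f k = ∑ k ∈ Finset.range (n + (N + 1)), f k :=
    finsum_eq_finsetSum_of_support_subset f fun k hk => by
      have := hN hk
      simp only [Finset.coe_range, mem_Iio]
      omega
  have hshift : ∑ᶠ k, f (k + n) = ∑ k ∈ Finset.range (N + 1), f (k + n) :=
    finsum_eq_finsetSum_of_support_subset (fun k => f (k + n)) fun k hk => by
      have := hN hk
      simp only [Finset.coe_range, mem_Iio]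
      omega
  rw [hf', hshift, Finset.sum_range_add]
  simp only [add_comm n]

lemma finsum_mem_prod_mul {α β R : Type*} [NonUnitalNonAssocSemiring R] {s : Set α}
    {t : Set β} (hs : s.Finite) (ht : t.Finite) (f : α → R) (g : β → R) :
    ∑ᶠ x ∈ s ×ˢ t, f x.1 * g x.2 = (∑ᶠ a ∈ s, f a) * ∑ᶠ b ∈ t, g b := by
  rw [finsum_mem_eq_finite_toFinset_sum _ (hs.prod ht), finsum_mem_eq_finite_toFinset_sum _ hs,
    finsum_mem_eq_finite_toFinset_sum _ ht, Finset.sum_mul_sum, ← Finite.toFinset_prod,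
    Finset.sum_product]

lemma finsum_eq_add_finsum_splitAt {m : ℕ → ℕ} (hm : Antitone m) (hfin : (support m).Finite)
    (r : ℕ) :
    ∑ᶠ k, m k =
      (r + 1) * m r + ∑ᶠ k, (splitAt r (m r) m).1 k + ∑ᶠ k, (splitAt r (m r) m).2 k := by
  have harm : ∑ᶠ k, (splitAt r (m r) m).2 k = ∑ k ∈ Finset.range r, (m k - m r) := by
    rw [finsum_eq_finsetSum_of_support_subset _ (s := Finset.range r) fun k hk => by
      by_contra h
      simp_all [splitAt]]
    exact Finset.sum_congr rfl fun k hk => if_pos (Finset.mem_range.mp hk)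
  have htop : ∑ k ∈ Finset.range r, m k = ∑ k ∈ Finset.range r, (m r + (m k - m r)) :=
    Finset.sum_congr rfl fun k hk => by
      have := hm (Finset.mem_range.mp hk).le
      omega
  rw [finsum_eq_sum_range_add_finsum_add hfin (r + 1), Finset.sum_range_succ, htop,
    Finset.sum_add_distrib, harm]
  simp only [Finset.sum_const, Finset.card_range, smul_eq_mul, splitAt, ← add_assoc]
  ring

lemma joinAt_splitAt {m : ℕ → ℕ} (hm : Antitone m) (r : ℕ) :
    joinAt r (m r) (splitAt r (m r) m) = m := by
  funext k
  simp only [joinAt, splitAt]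
  split_ifs with hk hkr
  · have := hm hk.le
    omega
  · rw [hkr]
  · rw [show k - (r + 1) + r + 1 = k by omega]

lemma splitAt_joinAt {x : (ℕ → ℕ) × (ℕ → ℕ)} {r : ℕ} (hx : ∀ k, r ≤ k → x.2 k = 0) (c : ℕ) :
    splitAt r c (joinAt r c x) = x := by
  refine Prod.ext (funext fun k => ?_) (funext fun k => ?_)
  · simp only [splitAt, joinAt, if_neg (by omega : ¬k + r + 1 < r),
      if_neg (by omega : k + r + 1 ≠ r)]
    rw [show k + r + 1 - (r + 1) = k by omega]
  · simp only [splitAt, joinAt]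
    split_ifs with hk
    · omega
    · exact (hx k (not_lt.mp hk)).symm

lemma splitAt_mem_of_mem_cornerFiber {p m : ℕ → ℕ} {r : ℕ} (hm : m ∈ cornerFiber p r) :
    splitAt r (p r) m ∈ partitionsBelow (belowCorner p r) ×ˢ
      partitionsBelow (aboveRightOfCorner p r) := by
  obtain ⟨⟨hanti, hle⟩, -, hlt⟩ := hm
  refine ⟨⟨fun a b hab => hanti (by omega), fun k => hle _⟩, ?_, fun k => ?_⟩
  · refine antitone_nat_of_succ_le fun k => ?_
    simp only [splitAt]
    split_ifs with h₁ h₂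
    · exact Nat.sub_le_sub_right (hanti k.le_succ) _
    all_goals omega
  · simp only [splitAt, aboveRightOfCorner]
    split_ifs with hk
    · have := hlt k hk
      omega
    · exact le_rfl

lemma lt_of_mem_outsideCornerRows {p : ℕ → ℕ} (hp : Antitone p) {r : ℕ}
    (hr : r ∈ outsideCornerRows p) {k : ℕ} (hk : k < r) : p r < p k := by
  rcases hr with h | h
  · omega
  · exact h.trans_le (hp (by omega))

lemma antitone_joinAt {r c : ℕ} {x : (ℕ → ℕ) × (ℕ → ℕ)} (h₁ : Antitone x.1)
    (h₂ : Antitone x.2) (hc : x.1 0 ≤ c) : Antitone (joinAt r c x) := by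
  refine antitone_nat_of_succ_le fun k => ?_
  simp only [joinAt]
  rcases lt_trichotomy (k + 1) r with hk | hk | hk
  · rw [if_pos hk, if_pos (by omega)]
    exact Nat.add_le_add_left (h₂ k.le_succ) c
  · rw [if_neg (by omega), if_pos hk, if_pos (by omega)]
    exact Nat.le_add_right c _
  · rw [if_neg (by omega), if_neg (by omega), if_neg (by omega)]
    split_ifs with hkr
    · rwa [hkr, Nat.sub_self]
    · exact h₁ (by omega)

lemma joinAt_mem_cornerFiber {p : ℕ → ℕ} (hp : Antitone p) {r : ℕ}
    (hr : r ∈ outsideCornerRows p) {x : (ℕ → ℕ) × (ℕ → ℕ)}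
    (hx : x ∈ partitionsBelow (belowCorner p r) ×ˢ partitionsBelow (aboveRightOfCorner p r)) :
    joinAt r (p r) x ∈ cornerFiber p r := by
  obtain ⟨⟨hν, hνle⟩, hτ, hτle⟩ := hx
  have harm : ∀ k < r, x.2 k < p k - p r := fun k hk => by
    have hτk : x.2 k ≤ p k - (p r + 1) := by simpa [aboveRightOfCorner, hk] using hτle k
    have := lt_of_mem_outsideCornerRows hp hr hk
    omega
  have hbelow : ∀ k, x.1 k ≤ p (k + r + 1) := hνle
  have hanti : Antitone (joinAt r (p r) x) :=
    antitone_joinAt hν hτ ((hbelow 0).trans (hp (by omega)))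
  refine ⟨⟨hanti, fun k => ?_⟩, by simp [joinAt], fun k hk => ?_⟩
  · simp only [joinAt]
    split_ifs with h₁ h₂
    · have := harm k h₁
      omega
    · rw [h₂]
    · simpa [show k - (r + 1) + r + 1 = k by omega] using hbelow (k - (r + 1))
  · have := harm k hk
    simp only [joinAt, if_pos hk]
    omega

lemma bijOn_splitAt_cornerFiber {p : ℕ → ℕ} (hp : Antitone p) {r : ℕ}
    (hr : r ∈ outsideCornerRows p) :
    BijOn (splitAt r (p r)) (cornerFiber p r)
      (partitionsBelow (belowCorner p r) ×ˢ partitionsBelow (aboveRightOfCorner p r)) := by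
  refine InvOn.bijOn (f' := joinAt r (p r)) ⟨fun m hm => ?_, fun x hx => ?_⟩
    (fun _ hm => splitAt_mem_of_mem_cornerFiber hm) (fun _ hx => joinAt_mem_cornerFiber hp hr hx)
  · have h := joinAt_splitAt hm.1.1 r
    rwa [hm.2.1] at h
  · refine splitAt_joinAt (fun k hk => ?_) _
    have := hx.2.2 k
    simpa [aboveRightOfCorner, not_lt.mpr hk] using this

lemma finsum_cornerFiber {p : ℕ → ℕ} (hp : Antitone p) (hfin : (support p).Finite) {r : ℕ}
    (hr : r ∈ outsideCornerRows p) (q : ℚ) :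
    ∑ᶠ m ∈ cornerFiber p r, q ^ ∑ᶠ i, m i =
      q ^ ((r + 1) * p r) * rankGen (belowCorner p r) q *
        rankGen (aboveRightOfCorner p r) q := by
  have hbelow : (support (belowCorner p r)).Finite :=
    hfin.preimage fun a _ b _ h => by simpa using h
  have harm : (support (aboveRightOfCorner p r)).Finite :=
    (Set.finite_Iio r).subset fun k hk => by
      by_contra h
      simp_all [aboveRightOfCorner]
  rw [rankGen_eq_finsum_partitionsBelow, rankGen_eq_finsum_partitionsBelow, mul_assoc,
    ← finsum_mem_prod_mul (partitionsBelow_finite hbelow) (partitionsBelow_finite harm),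
    mul_finsum_mem]
  refine finsum_mem_eq_of_bijOn _ (bijOn_splitAt_cornerFiber hp hr) fun m hm => ?_
  rw [finsum_eq_add_finsum_splitAt hm.1.1 (support_finite_of_mem_partitionsBelow hfin hm.1) r,
    hm.2.1, pow_add, pow_add, mul_assoc]

/-- For any partition `λ`, one has
`R(λ,q) = Σ_x q^{i(j-1)} · R(λ_(x),q) · R(λ^(x),q)`, where `x = (i,j)` runs over the
outside corner cells of `λ` (1-indexed row `i`, column `j`),
`λ_(x) = (λ_{i+1}, λ_{i+2}, …)` and `λ^(x) = (λ_1 - j, …, λ_{i-1} - j)`.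
Here, 0-indexed, the outside corner in row `r` exists iff `r = 0` or `p (r-1) > p r`,
and then `i = r+1`, `j = p r + 1`, so `q^{i(j-1)} = q^{(r+1)·(p r)}`. -/
theorem stmt5 (p : ℕ → ℕ) (hp : Antitone p) (hfin : (Function.support p).Finite) (q : ℚ) :
    rankGen p q =
      ∑ᶠ r ∈ {r : ℕ | r = 0 ∨ p r < p (r - 1)},
        q ^ ((r + 1) * p r) * rankGen (fun k => p (k + r + 1)) q *
          rankGen (fun k => if k < r then p k - (p r + 1) else 0) q := by
  have h0 : ∃ n, p n = 0 := hfin.exists_notMem.imp fun _ => notMem_support.mp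
  rw [rankGen_eq_finsum_partitionsBelow, partitionsBelow_eq_biUnion_cornerFiber h0,
    finsum_mem_biUnion ((pairwise_disjoint_cornerFiber p).set_pairwise _)
      (outsideCornerRows_finite hfin) fun _ _ =>
        (partitionsBelow_finite hfin).subset fun _ hm => hm.1]
  exact finsum_mem_congr rfl fun r hr => finsum_cornerFiber hp hfin hr q
end

section
/- For any partition λ, the number f^λ(+1) of standard barely set-valued tableaux of shape λ satisfies the recurrence f^λ(+1) = Σ_{x=(i,j)} (i−1) · f^{λ∪{x}}, where x runs over the outside corner cells of λ and f^μ denotes the number of standard Young tableaux of shape μ. -/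
open scoped BigOperators

/-- A standard Young tableau of shape `μ` (cells 0-indexed as `(row, column)`). -/
structure SYT (μ : YoungDiagram) where
  entry : ℕ × ℕ → ℕ
  outside : ∀ c : ℕ × ℕ, c ∉ μ → entry c = 0
  bijOn : Set.BijOn entry (μ.cells : Set (ℕ × ℕ)) (Set.Icc 1 μ.card)
  row_lt : ∀ i j1 j2 : ℕ, j1 < j2 → (i, j2) ∈ μ → entry (i, j1) < entry (i, j2)
  col_lt : ∀ i1 i2 j : ℕ, i1 < i2 → (i2, j) ∈ μ → entry (i1, j) < entry (i2, j)

/-- A standard barely set-valued tableau of shape `μ`: a filling of the cells of `μ` by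
the numbers `1, …, |μ|+1`, each used exactly once, with exactly one cell containing two
numbers and all other cells containing one, rows weakly increasing and columns strictly
increasing in the max/min sense. -/
structure SBSVT (μ : YoungDiagram) where
  entry : ℕ × ℕ → Finset ℕ
  outside : ∀ c : ℕ × ℕ, c ∉ μ → entry c = ∅
  nonempty : ∀ c : ℕ × ℕ, c ∈ μ → (entry c).Nonempty
  card_le : ∀ c : ℕ × ℕ, c ∈ μ → (entry c).card ≤ 2
  unique_double : ∃! c : ℕ × ℕ, c ∈ μ ∧ (entry c).card = 2
  mem_range : ∀ c : ℕ × ℕ, c ∈ μ → entry c ⊆ Finset.Icc 1 (μ.card + 1)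
  exactly_once : ∀ k ∈ Finset.Icc 1 (μ.card + 1), ∃! c : ℕ × ℕ, c ∈ μ ∧ k ∈ entry c
  row_le : ∀ i j1 j2 : ℕ, j1 < j2 → (i, j2) ∈ μ →
    ∀ a ∈ entry (i, j1), ∀ b ∈ entry (i, j2), a ≤ b
  col_lt : ∀ i1 i2 j : ℕ, i1 < i2 → (i2, j) ∈ μ →
    ∀ a ∈ entry (i1, j), ∀ b ∈ entry (i2, j), a < b

open scoped Classical in
/-- Add a cell to a Young diagram (when the result is still a Young diagram). -/
noncomputable def addCell (μ : YoungDiagram) (c : ℕ × ℕ) : YoungDiagram :=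
  if h : IsLowerSet (insert c (μ.cells : Set (ℕ × ℕ))) then
    ⟨insert c μ.cells, by rw [Finset.coe_insert]; exact h⟩
  else μ

/-!
Remove the largest entry `|μ| + 1` of a barely set-valued tableau. It sits in a corner `d` of
`μ`, either next to a smaller entry of `d`, leaving a standard tableau of shape `μ`, or alone,
leaving a barely set-valued tableau of shape `μ \ d`. Hence
`f^μ(+1) = ∑_d (f^μ + f^{μ \ d}(+1))`, and the formula follows by induction on `|μ|`: expand
`f^{μ ∪ c}` by the branching rule `f^ν = ∑_{d corner of ν} f^{ν \ d}`, match the terms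
`f^{μ \ d ∪ c}` (`c` not directly right of or below `d`) on both sides, and use that the
corners of `μ` and its outer corners off row `0` are paired row by row, so that
`∑_c row(c) = ∑_d (row(d) + 1)`.
-/

open Finset

theorem isLowerSet_insert_iff {α : Type*} [PartialOrder α] {s : Set α} (hs : IsLowerSet s)
    {a : α} : IsLowerSet (insert a s) ↔ ∀ b < a, b ∈ s := by
  refine ⟨fun h b hb => (h hb.le (Set.mem_insert a s)).resolve_left hb.ne, fun h => ?_⟩
  rintro x y hyx (rfl | hx)
  · exact (eq_or_lt_of_le hyx).imp id (h y)
  · exact Or.inr (hs hyx hx)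

theorem IsLowerSet.diff_singleton {α : Type*} [PartialOrder α] {s : Set α} (hs : IsLowerSet s)
    {a : α} (ha : ∀ b ∈ s, ¬a < b) : IsLowerSet (s \ {a}) := by
  rintro x y hyx ⟨hx, hxa⟩
  refine ⟨hs hyx hx, ?_⟩
  rintro rfl
  exact ha x hx (lt_of_le_of_ne hyx (Ne.symm hxa))

namespace YoungDiagram

variable {μ : YoungDiagram} {c c' d : ℕ × ℕ}

theorem rowLen_eq_of_forall_mem_iff {i m : ℕ} (h : ∀ j, (i, j) ∈ μ ↔ j < m) : μ.rowLen i = m :=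
  eq_of_forall_lt_iff fun j => mem_iff_lt_rowLen.symm.trans (h j)

theorem forall_lt_mem_iff {i j : ℕ} :
    (∀ b < (i, j), b ∈ μ) ↔ (0 < i → (i - 1, j) ∈ μ) ∧ (0 < j → (i, j - 1) ∈ μ) := by
  refine ⟨fun h => ⟨fun hi => h _ ?_, fun hj => h _ ?_⟩, fun ⟨hi, hj⟩ => ?_⟩
  · exact Prod.mk_lt_mk_iff_left.2 (Nat.sub_lt hi one_pos)
  · exact Prod.mk_lt_mk_iff_right.2 (Nat.sub_lt hj one_pos)
  rintro ⟨a, b⟩ hab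
  obtain ⟨ha, hb⟩ | ⟨ha, hb⟩ := Prod.lt_iff.1 hab
  · exact μ.up_left_mem (Nat.le_sub_one_of_lt ha) hb (hi (by omega))
  · exact μ.up_left_mem ha (Nat.le_sub_one_of_lt hb) (hj (by omega))

def corners (μ : YoungDiagram) : Finset (ℕ × ℕ) :=
  {d ∈ μ.cells | (d.1, d.2 + 1) ∉ μ ∧ (d.1 + 1, d.2) ∉ μ}

theorem mem_corners : d ∈ μ.corners ↔ d ∈ μ ∧ (d.1, d.2 + 1) ∉ μ ∧ (d.1 + 1, d.2) ∉ μ := by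
  simp [corners]

theorem mem_corners_iff_rowLen :
    d ∈ μ.corners ↔ μ.rowLen d.1 = d.2 + 1 ∧ μ.rowLen (d.1 + 1) ≤ d.2 := by
  obtain ⟨i, j⟩ := d
  have := μ.rowLen_anti i (i + 1) i.le_succ
  simp only [mem_corners, mem_iff_lt_rowLen]
  omega

theorem mem_of_mem_corners (hd : d ∈ μ.corners) : d ∈ μ := (mem_corners.1 hd).1

theorem not_lt_of_mem_corners (hd : d ∈ μ.corners) (hc : c ∈ μ) : ¬d < c := by
  obtain ⟨i, j⟩ := d
  obtain ⟨a, b⟩ := c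
  obtain ⟨-, hright, hbelow⟩ := mem_corners.1 hd
  intro h
  obtain ⟨ha, hb⟩ | ⟨ha, hb⟩ := Prod.lt_iff.1 h
  · exact hbelow (μ.up_left_mem ha hb hc)
  · exact hright (μ.up_left_mem ha hb hc)

theorem ne_of_lt_of_mem_corners (hd : d ∈ μ.corners) (hc : c' ∈ μ) (h : c < c') : c ≠ d :=
  fun hcd => not_lt_of_mem_corners hd hc (hcd ▸ h)

def eraseCell (μ : YoungDiagram) (d : ℕ × ℕ) : YoungDiagram :=
  if hd : d ∈ μ.corners then
    ⟨μ.cells.erase d, by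
      rw [coe_erase]
      exact μ.isLowerSet.diff_singleton fun c hc => not_lt_of_mem_corners hd hc⟩
  else μ

theorem cells_eraseCell (hd : d ∈ μ.corners) : (μ.eraseCell d).cells = μ.cells.erase d := by
  rw [eraseCell, dif_pos hd]

theorem coe_cells_eraseCell (hd : d ∈ μ.corners) :
    ((μ.eraseCell d).cells : Set (ℕ × ℕ)) = (μ.cells : Set (ℕ × ℕ)) \ {d} := by
  rw [cells_eraseCell hd, coe_erase]

theorem mem_eraseCell (hd : d ∈ μ.corners) : c ∈ μ.eraseCell d ↔ c ≠ d ∧ c ∈ μ := by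
  rw [← mem_cells, cells_eraseCell hd, mem_erase, mem_cells]

theorem notMem_eraseCell_self (hd : d ∈ μ.corners) : d ∉ μ.eraseCell d := by
  simp [mem_eraseCell hd]

theorem card_eraseCell_add_one (hd : d ∈ μ.corners) : (μ.eraseCell d).card + 1 = μ.card := by
  rw [YoungDiagram.card, cells_eraseCell hd,
    card_erase_add_one ((mem_cells d).2 (mem_of_mem_corners hd))]

theorem rowLen_eraseCell (hd : d ∈ μ.corners) (i : ℕ) :
    (μ.eraseCell d).rowLen i = if i = d.1 then d.2 else μ.rowLen i := by
  have hrow := (mem_corners_iff_rowLen.1 hd).1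
  obtain ⟨a, b⟩ := d
  dsimp only at hrow
  refine rowLen_eq_of_forall_mem_iff fun j => ?_
  rw [mem_eraseCell hd, mem_iff_lt_rowLen, ne_eq, Prod.mk.injEq]
  split_ifs with h
  · subst h; omega
  · tauto

def outerCorners (μ : YoungDiagram) : Finset (ℕ × ℕ) :=
  {c ∈ range (μ.colLen 0 + 1) ×ˢ range (μ.rowLen 0 + 1) |
    c.2 = μ.rowLen c.1 ∧ (c.1 = 0 ∨ c.2 < μ.rowLen (c.1 - 1))}

theorem mem_outerCorners_iff_rowLen :
    c ∈ μ.outerCorners ↔ c.2 = μ.rowLen c.1 ∧ (c.1 = 0 ∨ c.2 < μ.rowLen (c.1 - 1)) := by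
  obtain ⟨i, j⟩ := c
  simp only [outerCorners, mem_filter, mem_product, mem_range, and_iff_right_iff_imp]
  rintro ⟨rfl, hi⟩
  refine ⟨?_, Nat.lt_succ_of_le (μ.rowLen_anti 0 i i.zero_le)⟩
  rcases hi with rfl | hi
  · omega
  · have := mem_iff_lt_colLen.1 (μ.up_left_mem le_rfl (Nat.zero_le _) (mem_iff_lt_rowLen.2 hi))
    omega

theorem mem_outerCorners :
    c ∈ μ.outerCorners ↔ c ∉ μ ∧ IsLowerSet (insert c (μ.cells : Set (ℕ × ℕ))) := by
  obtain ⟨i, j⟩ := c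
  have := μ.rowLen_anti (i - 1) i (Nat.sub_le i 1)
  simp only [isLowerSet_insert_iff μ.isLowerSet, Finset.mem_coe, mem_cells]
  rw [forall_lt_mem_iff, mem_outerCorners_iff_rowLen, mem_iff_lt_rowLen, mem_iff_lt_rowLen,
    mem_iff_lt_rowLen]
  dsimp only
  omega

theorem cells_addCell (hc : c ∈ μ.outerCorners) : (addCell μ c).cells = insert c μ.cells := by
  rw [addCell, dif_pos (mem_outerCorners.1 hc).2]

theorem mem_addCell (hc : c ∈ μ.outerCorners) : c' ∈ addCell μ c ↔ c' = c ∨ c' ∈ μ := by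
  rw [← mem_cells, cells_addCell hc, mem_insert, mem_cells]

theorem card_addCell (hc : c ∈ μ.outerCorners) : (addCell μ c).card = μ.card + 1 := by
  rw [YoungDiagram.card, cells_addCell hc,
    card_insert_of_notMem fun h => (mem_outerCorners.1 hc).1 ((mem_cells c).1 h)]

theorem rowLen_addCell (hc : c ∈ μ.outerCorners) (i : ℕ) :
    (addCell μ c).rowLen i = if i = c.1 then c.2 + 1 else μ.rowLen i := by
  have hrow := (mem_outerCorners_iff_rowLen.1 hc).1
  obtain ⟨a, b⟩ := c
  dsimp only at hrow
  refine rowLen_eq_of_forall_mem_iff fun j => ?_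
  rw [mem_addCell hc, mem_iff_lt_rowLen, Prod.mk.injEq]
  split_ifs with h
  · subst h; omega
  · tauto

theorem eraseCell_addCell (hc : c ∈ μ.outerCorners) : (addCell μ c).eraseCell c = μ := by
  have hc' : c ∈ (addCell μ c).corners := by
    rw [mem_corners_iff_rowLen, rowLen_addCell hc, rowLen_addCell hc, if_pos rfl,
      if_neg (Nat.succ_ne_self c.1), (mem_outerCorners_iff_rowLen.1 hc).1]
    exact ⟨rfl, μ.rowLen_anti _ _ c.1.le_succ⟩
  ext : 1
  rw [cells_eraseCell hc', cells_addCell hc,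
    erase_insert fun h => (mem_outerCorners.1 hc).1 ((mem_cells c).1 h)]

theorem addCell_eraseCell (hd : d ∈ μ.corners) : addCell (μ.eraseCell d) d = μ := by
  have hd' : d ∈ (μ.eraseCell d).outerCorners := by
    have hrow := mem_corners_iff_rowLen.1 hd
    rw [mem_outerCorners_iff_rowLen, rowLen_eraseCell hd, rowLen_eraseCell hd, if_pos rfl]
    refine ⟨rfl, d.1.eq_zero_or_pos.imp_right fun h => ?_⟩
    rw [if_neg (by omega)]
    have := μ.rowLen_anti (d.1 - 1) d.1 (Nat.sub_le _ _)
    omega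
  ext : 1
  rw [cells_addCell hd', cells_eraseCell hd, insert_erase ((mem_cells d).2 (mem_of_mem_corners hd))]

section CovBy

open scoped Classical

theorem corners_addCell (hc : c ∈ μ.outerCorners) :
    (addCell μ c).corners = insert c {d ∈ μ.corners | ¬d ⋖ c} := by
  have hc' := mem_outerCorners_iff_rowLen.1 hc
  ext ⟨i, j⟩
  rw [mem_insert, mem_filter, mem_corners_iff_rowLen, mem_corners_iff_rowLen,
    rowLen_addCell hc, rowLen_addCell hc]
  obtain ⟨a, b⟩ := c
  simp only [Prod.mk_covBy_mk_iff, Nat.covBy_iff_add_one_eq, Prod.mk.injEq] at hc' ⊢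
  have := μ.rowLen_anti i (i + 1) i.le_succ
  rcases eq_or_ne i a with rfl | hia
  · rw [if_pos rfl, if_neg (by omega)]
    omega
  rw [if_neg hia]
  rcases eq_or_ne (i + 1) a with rfl | hia'
  · rw [if_pos rfl]
    rw [Nat.add_sub_cancel] at hc'
    omega
  rw [if_neg hia']
  omega

theorem outerCorners_eraseCell (hd : d ∈ μ.corners) :
    (μ.eraseCell d).outerCorners = insert d {c ∈ μ.outerCorners | ¬d ⋖ c} := by
  have hd' := mem_corners_iff_rowLen.1 hd
  ext ⟨a, b⟩
  rw [mem_insert, mem_filter, mem_outerCorners_iff_rowLen, mem_outerCorners_iff_rowLen,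
    rowLen_eraseCell hd, rowLen_eraseCell hd]
  obtain ⟨i, j⟩ := d
  simp only [Prod.mk_covBy_mk_iff, Nat.covBy_iff_add_one_eq, Prod.mk.injEq] at hd' ⊢
  rcases eq_or_ne a i with rfl | hai
  · rw [if_pos rfl]
    rcases Nat.eq_zero_or_pos a with rfl | ha
    · simp only [true_or, and_true, true_and, zero_add] at hd' ⊢
      omega
    have := μ.rowLen_anti (a - 1) a (Nat.sub_le a 1)
    rw [if_neg (by omega)]
    omega
  rw [if_neg hai]
  rcases eq_or_ne a (i + 1) with rfl | hai'
  · rw [if_pos (Nat.add_sub_cancel i 1), Nat.add_sub_cancel]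
    omega
  rw [if_neg (by omega)]
  omega

theorem eraseCell_addCell_comm (hc : c ∈ μ.outerCorners) (hd : d ∈ μ.corners) (hdc : ¬d ⋖ c) :
    (addCell μ c).eraseCell d = addCell (μ.eraseCell d) c := by
  have hd' : d ∈ (addCell μ c).corners := by
    rw [corners_addCell hc]
    exact mem_insert_of_mem (mem_filter.2 ⟨hd, hdc⟩)
  have hc' : c ∈ (μ.eraseCell d).outerCorners := by
    rw [outerCorners_eraseCell hd]
    exact mem_insert_of_mem (mem_filter.2 ⟨hc, hdc⟩)
  have hne : d ≠ c := fun h => (mem_outerCorners.1 hc).1 (h ▸ mem_of_mem_corners hd)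
  ext : 1
  rw [cells_eraseCell hd', cells_addCell hc, cells_addCell hc', cells_eraseCell hd,
    erase_insert_of_ne hne.symm]

end CovBy

/-- Removing the corner ending row `i` and adding the outer corner that starts row `i + 1`
pair the corners of `μ` with its outer corners outside row `0`. -/
theorem sum_fst_outerCorners (μ : YoungDiagram) :
    ∑ c ∈ μ.outerCorners, c.1 = ∑ d ∈ μ.corners, (d.1 + 1) := by
  rw [← sum_filter_ne_zero]
  refine sum_nbij' (fun c => (c.1 - 1, μ.rowLen (c.1 - 1) - 1))
    (fun d => (d.1 + 1, μ.rowLen (d.1 + 1))) ?_ ?_ ?_ ?_ ?_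
  all_goals
    rintro ⟨a, b⟩ h
    simp only [mem_filter, mem_outerCorners_iff_rowLen, mem_corners_iff_rowLen] at h
    try obtain ⟨a, rfl⟩ := Nat.exists_eq_add_one_of_ne_zero h.2
    simp only [mem_filter, mem_outerCorners_iff_rowLen, mem_corners_iff_rowLen,
      Nat.add_sub_cancel, Prod.mk.injEq, true_and] at h ⊢ <;>
    omega

end YoungDiagram

theorem Function.injective_sigma_of_fst {ι γ : Type*} {β : ι → Type*} {F : (Σ i, β i) → γ}
    (hfst : ∀ p q, F p = F q → p.1 = q.1) (hF : ∀ i, Function.Injective fun b : β i => F ⟨i, b⟩) :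
    Function.Injective F := by
  rintro ⟨i, b⟩ ⟨j, b'⟩ h
  obtain rfl : i = j := hfst _ _ h
  rw [hF i h]

theorem Nat.card_eq_sum_of_bijective_sigma {ι γ : Type*} {s : Finset ι} {β : ι → Type*}
    [∀ i, Finite (β i)] {F : (Σ i : s, β i) → γ} (hF : Function.Bijective F) :
    Nat.card γ = ∑ i ∈ s, Nat.card (β i) := by
  rw [← Nat.card_eq_of_bijective F hF, Nat.card_sigma, sum_coe_sort s fun i => Nat.card (β i)]

theorem Set.insert_Icc_one_add_one (n : ℕ) : insert (n + 1) (Set.Icc 1 n) = Set.Icc 1 (n + 1) := by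
  ext k
  simp only [Set.mem_insert_iff, Set.mem_Icc]
  omega

open YoungDiagram

namespace SYT

variable {μ : YoungDiagram} {c d : ℕ × ℕ}

theorem ext_of_mem {T U : SYT μ} (h : ∀ c ∈ μ, T.entry c = U.entry c) : T = U := by
  obtain ⟨e, he, _, _, _⟩ := T
  obtain ⟨e', he', _, _, _⟩ := U
  obtain rfl : e = e' :=
    funext fun c => if hc : c ∈ μ then h c hc else (he c hc).trans (he' c hc).symm
  rfl

theorem one_le_entry (T : SYT μ) (hc : c ∈ μ) : 1 ≤ T.entry c :=
  (T.bijOn.mapsTo ((mem_cells c).2 hc)).1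

theorem entry_le_card (T : SYT μ) (c : ℕ × ℕ) : T.entry c ≤ μ.card := by
  by_cases hc : c ∈ μ
  · exact (T.bijOn.mapsTo ((mem_cells c).2 hc)).2
  · rw [T.outside c hc]
    exact Nat.zero_le _

instance (μ : YoungDiagram) : Finite (SYT μ) :=
  Finite.of_injective
    (fun T (c : μ.cells) => (⟨T.entry c, Nat.lt_succ_of_le (T.entry_le_card c)⟩ : Fin (μ.card + 1)))
    fun _ _ h => ext_of_mem fun c hc => congrArg Fin.val (congrFun h ⟨c, (mem_cells c).2 hc⟩)

theorem entry_lt_entry (T : SYT μ) {c c' : ℕ × ℕ} (h : c < c') (hc' : c' ∈ μ) :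
    T.entry c < T.entry c' := by
  obtain ⟨a, b⟩ := c
  obtain ⟨a', b'⟩ := c'
  have hmid : (a, b') ∈ μ := μ.up_left_mem h.le.1 le_rfl hc'
  obtain ⟨ha, hb⟩ | ⟨ha, hb⟩ := Prod.mk_lt_mk.1 h
  · calc T.entry (a, b) ≤ T.entry (a, b') := by
          rcases hb.eq_or_lt with hb | hb
          · rw [hb]
          · exact (T.row_lt a b b' hb hmid).le
      _ < T.entry (a', b') := T.col_lt a a' b' ha hc'
  · calc T.entry (a, b) < T.entry (a, b') := T.row_lt a b b' hb hmid
      _ ≤ T.entry (a', b') := by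
          rcases ha.eq_or_lt with ha | ha
          · rw [ha]
          · exact (T.col_lt a a' b' ha hc').le

/-- Row and column conditions at once: the entries increase along the product order. -/
def ofLt (entry : ℕ × ℕ → ℕ) (outside : ∀ c, c ∉ μ → entry c = 0)
    (bijOn : Set.BijOn entry μ.cells (Set.Icc 1 μ.card))
    (lt : ∀ c c', c < c' → c' ∈ μ → entry c < entry c') : SYT μ where
  entry := entry
  outside := outside
  bijOn := bijOn
  row_lt _ _ _ hj h := lt _ _ (Prod.mk_lt_mk_iff_right.2 hj) h
  col_lt _ _ _ hi h := lt _ _ (Prod.mk_lt_mk_iff_left.2 hi) h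

theorem bijOn_extend (hd : d ∈ μ.corners) (T : SYT (μ.eraseCell d)) :
    Set.BijOn (fun c => if c = d then μ.card else T.entry c) μ.cells (Set.Icc 1 μ.card) := by
  have hcard := card_eraseCell_add_one hd
  have hT : Set.BijOn (fun c => if c = d then μ.card else T.entry c) (μ.eraseCell d).cells
      (Set.Icc 1 (μ.eraseCell d).card) :=
    T.bijOn.congr fun c hc =>
      (if_neg (ne_of_mem_of_not_mem ((mem_cells c).1 hc) (notMem_eraseCell_self hd))).symm
  have h := hT.insert (a := d) (by simp only [↓reduceIte, Set.mem_Icc]; omega)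
  rwa [if_pos rfl, coe_cells_eraseCell hd, Set.insert_sdiff_singleton,
    Set.insert_eq_of_mem ((mem_cells d).2 (mem_of_mem_corners hd)), ← hcard,
    Set.insert_Icc_one_add_one, hcard] at h

def extend (hd : d ∈ μ.corners) (T : SYT (μ.eraseCell d)) : SYT μ :=
  ofLt (fun c => if c = d then μ.card else T.entry c)
    (fun c hc => by
      rw [if_neg (ne_of_mem_of_not_mem (mem_of_mem_corners hd) hc).symm, T.outside]
      exact fun h => hc ((mem_eraseCell hd).1 h).2)
    (bijOn_extend hd T)
    (fun c c' hcc' hc' => by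
      have hcd := ne_of_lt_of_mem_corners hd hc' hcc'
      rw [if_neg hcd]
      split_ifs with hc'd
      · have := T.entry_le_card c
        have := card_eraseCell_add_one hd
        omega
      · exact T.entry_lt_entry hcc' ((mem_eraseCell hd).2 ⟨hc'd, hc'⟩))

theorem bijOn_restrict (hd : d ∈ μ.corners) (U : SYT μ) (hU : U.entry d = μ.card) :
    Set.BijOn (fun c => if c = d then 0 else U.entry c) (μ.eraseCell d).cells
      (Set.Icc 1 (μ.eraseCell d).card) := by
  have hcard := card_eraseCell_add_one hd
  have h := U.bijOn.sdiff_singleton ((mem_cells d).2 (mem_of_mem_corners hd))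
  rw [hU, ← hcard, ← Set.insert_Icc_one_add_one,
    Set.insert_sdiff_self_of_notMem (by simp), ← coe_cells_eraseCell hd] at h
  exact h.congr fun c hc =>
    (if_neg (ne_of_mem_of_not_mem ((mem_cells c).1 hc) (notMem_eraseCell_self hd))).symm

def restrict (hd : d ∈ μ.corners) (U : SYT μ) (hU : U.entry d = μ.card) :
    SYT (μ.eraseCell d) :=
  ofLt (fun c => if c = d then 0 else U.entry c)
    (fun c hc => by
      split_ifs with hcd
      · rfl
      · exact U.outside c fun h => hc ((mem_eraseCell hd).2 ⟨hcd, h⟩))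
    (bijOn_restrict hd U hU)
    (fun c c' hcc' hc' => by
      obtain ⟨hc'd, hc'⟩ := (mem_eraseCell hd).1 hc'
      rw [if_neg (ne_of_lt_of_mem_corners hd hc' hcc'), if_neg hc'd]
      exact U.entry_lt_entry hcc' hc')

theorem extend_restrict (hd : d ∈ μ.corners) (U : SYT μ) (hU : U.entry d = μ.card) :
    extend hd (restrict hd U hU) = U :=
  ext_of_mem fun c _ => by
    change (if c = d then μ.card else if c = d then 0 else U.entry c) = U.entry c
    split_ifs with h
    · rw [h, hU]
    · rfl

theorem extend_entry_self (hd : d ∈ μ.corners) (T : SYT (μ.eraseCell d)) :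
    (extend hd T).entry d = μ.card :=
  if_pos rfl

theorem eq_of_extend_entry_eq_card (hd : d ∈ μ.corners) (T : SYT (μ.eraseCell d))
    (h : (extend hd T).entry c = μ.card) : c = d := by
  by_contra hcd
  change (if c = d then μ.card else T.entry c) = μ.card at h
  rw [if_neg hcd] at h
  have := T.entry_le_card c
  have := card_eraseCell_add_one hd
  omega

theorem extend_injective (hd : d ∈ μ.corners) : Function.Injective (extend hd) :=
  fun T T' h => ext_of_mem fun c hc => by
    have := congrArg (fun U => U.entry c) h
    simpa only [extend, ofLt, if_neg ((mem_eraseCell hd).1 hc).1] using this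

theorem mem_corners_of_entry_eq_card (U : SYT μ) (hd : d ∈ μ) (hU : U.entry d = μ.card) :
    d ∈ μ.corners := by
  refine mem_corners.2 ⟨hd, fun h => ?_, fun h => ?_⟩
  · have := U.entry_lt_entry (c := d) (Prod.mk_lt_mk_iff_right.2 (Nat.lt_add_one _)) h
    have := U.entry_le_card (d.1, d.2 + 1)
    omega
  · have := U.entry_lt_entry (c := d) (Prod.mk_lt_mk_iff_left.2 (Nat.lt_add_one _)) h
    have := U.entry_le_card (d.1 + 1, d.2)
    omega

theorem card_eq_sum_corners (hμ : 0 < μ.card) :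
    Nat.card (SYT μ) = ∑ d ∈ μ.corners, Nat.card (SYT (μ.eraseCell d)) := by
  refine Nat.card_eq_sum_of_bijective_sigma (F := fun p => extend p.1.2 p.2) ⟨?_, fun U => ?_⟩
  · refine Function.injective_sigma_of_fst (fun ⟨⟨d, hd⟩, T⟩ ⟨⟨d', hd'⟩, T'⟩ h => ?_)
      fun d => extend_injective d.2
    have : (extend hd' T').entry d = μ.card := by rw [← h, extend_entry_self]
    exact Subtype.ext (eq_of_extend_entry_eq_card hd' T' this)
  · obtain ⟨d, hd, hU⟩ := U.bijOn.surjOn (Set.mem_Icc.2 ⟨hμ, le_rfl⟩)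
    have hd := mem_corners_of_entry_eq_card U ((mem_cells d).1 hd) hU
    exact ⟨⟨⟨d, hd⟩, restrict hd U hU⟩, extend_restrict hd U hU⟩

end SYT

namespace SBSVT

variable {μ : YoungDiagram} {c d : ℕ × ℕ} {a : ℕ}

theorem ext_of_mem {X Y : SBSVT μ} (h : ∀ c ∈ μ, X.entry c = Y.entry c) : X = Y := by
  obtain ⟨e, he, _, _, _, _, _, _, _⟩ := X
  obtain ⟨e', he', _, _, _, _, _, _, _⟩ := Y
  obtain rfl : e = e' :=
    funext fun c => if hc : c ∈ μ then h c hc else (he c hc).trans (he' c hc).symm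
  rfl

theorem mem_of_mem_entry (X : SBSVT μ) (ha : a ∈ X.entry c) : c ∈ μ := by
  by_contra hc
  rw [X.outside c hc] at ha
  exact notMem_empty a ha

theorem mem_Icc_of_mem_entry (X : SBSVT μ) (ha : a ∈ X.entry c) : a ∈ Icc 1 (μ.card + 1) :=
  X.mem_range c (X.mem_of_mem_entry ha) ha

theorem le_card_add_one (X : SBSVT μ) (ha : a ∈ X.entry c) : a ≤ μ.card + 1 :=
  (mem_Icc.1 (X.mem_Icc_of_mem_entry ha)).2

theorem eq_of_mem_entry (X : SBSVT μ) {c' : ℕ × ℕ} (ha : a ∈ X.entry c) (ha' : a ∈ X.entry c') :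
    c = c' :=
  (X.exactly_once a (X.mem_Icc_of_mem_entry ha)).unique ⟨X.mem_of_mem_entry ha, ha⟩
    ⟨X.mem_of_mem_entry ha', ha'⟩

instance (μ : YoungDiagram) : Finite (SBSVT μ) :=
  Finite.of_injective
    (fun X (c : μ.cells) => (⟨X.entry c, mem_powerset.2 (X.mem_range c ((mem_cells c).1 c.2))⟩ :
      (Icc 1 (μ.card + 1)).powerset))
    fun _ _ h => ext_of_mem fun c hc => congrArg Subtype.val (congrFun h ⟨c, (mem_cells c).2 hc⟩)

theorem mem_corners_of_top_mem (X : SBSVT μ) (h : μ.card + 1 ∈ X.entry d) : d ∈ μ.corners := by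
  refine mem_corners.2 ⟨X.mem_of_mem_entry h, fun hright => ?_, fun hbelow => ?_⟩
  · obtain ⟨b, hb⟩ := X.nonempty _ hright
    have := X.row_le d.1 d.2 (d.2 + 1) (Nat.lt_add_one _) hright _ h b hb
    have hb' : b = μ.card + 1 := le_antisymm (X.le_card_add_one hb) this
    have := congrArg Prod.snd (X.eq_of_mem_entry h (hb' ▸ hb))
    simp at this
  · obtain ⟨b, hb⟩ := X.nonempty _ hbelow
    have := X.col_lt d.1 (d.1 + 1) d.2 (Nat.lt_add_one _) hbelow _ h b hb
    have := X.le_card_add_one hb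
    omega

def entryOfSYT (T : SYT μ) (d c : ℕ × ℕ) : Finset ℕ :=
  if c ∈ μ then (if c = d then {T.entry c, μ.card + 1} else {T.entry c}) else ∅

theorem mem_entryOfSYT {T : SYT μ} :
    a ∈ entryOfSYT T d c ↔ c ∈ μ ∧ (a = T.entry c ∨ c = d ∧ a = μ.card + 1) := by
  unfold entryOfSYT
  split_ifs with hc hcd
  · subst hcd
    simp [hc]
  · simp [hc, hcd]
  · simp [hc]

theorem lt_of_mem_entryOfSYT {T : SYT μ} (hd : d ∈ μ.corners) {c' : ℕ × ℕ} {b : ℕ}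
    (hcc' : c < c') (hc' : c' ∈ μ) (ha : a ∈ entryOfSYT T d c) (hb : b ∈ entryOfSYT T d c') :
    a < b := by
  obtain ⟨-, rfl | ⟨hcd, -⟩⟩ := mem_entryOfSYT.1 ha
  · have := T.entry_lt_entry hcc' hc'
    have := T.entry_le_card c
    obtain ⟨-, rfl | ⟨-, rfl⟩⟩ := mem_entryOfSYT.1 hb <;> omega
  · exact absurd hcd (ne_of_lt_of_mem_corners hd hc' hcc')

theorem card_entryOfSYT_self (T : SYT μ) (hd : d ∈ μ) : (entryOfSYT T d d).card = 2 := by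
  rw [entryOfSYT, if_pos hd, if_pos rfl, card_pair]
  have := T.entry_le_card d
  omega

def ofSYT (hd : d ∈ μ.corners) (T : SYT μ) : SBSVT μ where
  entry := entryOfSYT T d
  outside _ hc := if_neg hc
  nonempty c hc := ⟨T.entry c, mem_entryOfSYT.2 ⟨hc, Or.inl rfl⟩⟩
  card_le c hc := by
    unfold entryOfSYT
    split_ifs <;> simp [card_le_two]
  unique_double := by
    refine ⟨d, ⟨mem_of_mem_corners hd, card_entryOfSYT_self T (mem_of_mem_corners hd)⟩,
      fun c ⟨hc, h2⟩ => by_contra fun hcd => ?_⟩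
    simp [entryOfSYT, hc, hcd] at h2
  mem_range c _ a ha := by
    obtain ⟨hc, rfl | ⟨-, rfl⟩⟩ := mem_entryOfSYT.1 ha
    · exact mem_Icc.2 ⟨T.one_le_entry hc, (T.entry_le_card c).trans (Nat.le_succ _)⟩
    · exact mem_Icc.2 ⟨le_add_self, le_rfl⟩
  exactly_once k hk := by
    rcases eq_or_ne k (μ.card + 1) with rfl | hk'
    · refine ⟨d, ⟨mem_of_mem_corners hd, mem_entryOfSYT.2
        ⟨mem_of_mem_corners hd, Or.inr ⟨rfl, rfl⟩⟩⟩, fun c ⟨_, hc⟩ => ?_⟩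
      obtain ⟨-, h | ⟨h, -⟩⟩ := mem_entryOfSYT.1 hc
      · have := T.entry_le_card c
        omega
      · exact h
    · obtain ⟨c, hc, rfl⟩ :=
        T.bijOn.surjOn (show k ∈ Set.Icc 1 μ.card by rw [mem_Icc] at hk; exact ⟨hk.1, by omega⟩)
      refine ⟨c, ⟨hc, mem_entryOfSYT.2 ⟨hc, Or.inl rfl⟩⟩, fun c' ⟨hc', h⟩ => ?_⟩
      obtain ⟨-, h | ⟨-, h⟩⟩ := mem_entryOfSYT.1 h
      · exact T.bijOn.injOn ((mem_cells c').2 hc') hc h.symm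
      · exact absurd h hk'
  row_le _ _ _ hj h _ ha _ hb :=
    (lt_of_mem_entryOfSYT hd (Prod.mk_lt_mk_iff_right.2 hj) h ha hb).le
  col_lt _ _ _ hi h _ ha _ hb := lt_of_mem_entryOfSYT hd (Prod.mk_lt_mk_iff_left.2 hi) h ha hb

theorem top_mem_ofSYT_entry_iff (hd : d ∈ μ.corners) (T : SYT μ) :
    μ.card + 1 ∈ (ofSYT hd T).entry c ↔ c = d := by
  refine ⟨fun h => ?_, fun h => mem_entryOfSYT.2 ⟨h ▸ mem_of_mem_corners hd, Or.inr ⟨h, rfl⟩⟩⟩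
  obtain ⟨-, h | ⟨h, -⟩⟩ := mem_entryOfSYT.1 h
  · have := T.entry_le_card c
    omega
  · exact h

theorem ofSYT_injective (hd : d ∈ μ.corners) : Function.Injective (ofSYT (μ := μ) hd) :=
  fun T T' h => SYT.ext_of_mem fun c hc => by
    have hT : T.entry c ∈ (ofSYT hd T').entry c := h ▸ mem_entryOfSYT.2 ⟨hc, Or.inl rfl⟩
    obtain ⟨-, h' | ⟨-, h'⟩⟩ := mem_entryOfSYT.1 hT
    · exact h'
    · have := T.entry_le_card c
      omega

theorem exists_entry_eq (X : SBSVT μ) (htop : μ.card + 1 ∈ X.entry d)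
    (h2 : (X.entry d).card = 2) (hc : c ∈ μ) :
    ∃ a ≤ μ.card, X.entry c = if c = d then {a, μ.card + 1} else {a} := by
  split_ifs with hcd
  · subst hcd
    obtain ⟨a, ha⟩ := card_eq_one.1 (by rw [card_erase_of_mem htop, h2] :
      ((X.entry c).erase (μ.card + 1)).card = 1)
    have ha' : a ∈ (X.entry c).erase (μ.card + 1) := ha ▸ mem_singleton_self a
    refine ⟨a, ?_, by rw [← insert_erase htop, ha, pair_comm]⟩
    have := X.le_card_add_one (mem_of_mem_erase ha')
    have := ne_of_mem_erase ha'
    omega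
  · have hne : (X.entry c).card ≠ 2 := fun h =>
      hcd (X.unique_double.unique ⟨hc, h⟩ ⟨X.mem_of_mem_entry htop, h2⟩)
    have := X.card_le c hc
    have := card_pos.2 (X.nonempty c hc)
    obtain ⟨a, ha⟩ := card_eq_one.1 (by omega : (X.entry c).card = 1)
    have hmem : a ∈ X.entry c := ha ▸ mem_singleton_self a
    have : a ≠ μ.card + 1 := fun h => hcd (X.eq_of_mem_entry hmem (h ▸ htop))
    have := X.le_card_add_one hmem
    exact ⟨a, by omega, ha⟩

theorem sInf_entry_eq (X : SBSVT μ) (htop : μ.card + 1 ∈ X.entry d)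
    (h2 : (X.entry d).card = 2) (ha : a ∈ X.entry c) (hne : a ≠ μ.card + 1) :
    sInf (X.entry c : Set ℕ) = a := by
  obtain ⟨a', ha', he⟩ := X.exists_entry_eq htop h2 (X.mem_of_mem_entry ha)
  split_ifs at he <;> rw [he] at ha ⊢ <;> simp only [mem_insert, mem_singleton] at ha
  · rw [coe_pair, csInf_pair]
    omega
  · rw [coe_singleton, csInf_singleton, ha]

theorem sInf_entry_mem (X : SBSVT μ) (htop : μ.card + 1 ∈ X.entry d)
    (h2 : (X.entry d).card = 2) (hc : c ∈ μ) :
    sInf (X.entry c : Set ℕ) ∈ X.entry c ∧ sInf (X.entry c : Set ℕ) ≤ μ.card := by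
  obtain ⟨a, ha, he⟩ := X.exists_entry_eq htop h2 hc
  have hmem : a ∈ X.entry c := by
    rw [he]
    split_ifs <;> simp
  rw [X.sInf_entry_eq htop h2 hmem (by omega)]
  exact ⟨hmem, ha⟩

/-- The cell minima: this deletes `|μ| + 1` from the double cell `d`. -/
noncomputable def toSYT (X : SBSVT μ) (htop : μ.card + 1 ∈ X.entry d)
    (h2 : (X.entry d).card = 2) : SYT μ where
  entry c := sInf (X.entry c : Set ℕ)
  outside c hc := by rw [X.outside c hc, coe_empty, Nat.sInf_empty]
  bijOn := by
    refine ⟨fun c hc => ?_, fun c hc c' hc' h => ?_, fun k hk => ?_⟩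
    · have := X.sInf_entry_mem htop h2 hc
      exact ⟨(mem_Icc.1 (X.mem_Icc_of_mem_entry this.1)).1, this.2⟩
    · have h : sInf (X.entry c : Set ℕ) = sInf (X.entry c' : Set ℕ) := h
      exact X.eq_of_mem_entry (X.sInf_entry_mem htop h2 hc).1
        (h ▸ (X.sInf_entry_mem htop h2 hc').1)
    · obtain ⟨c, ⟨hc, hkc⟩, -⟩ :=
        X.exactly_once k (mem_Icc.2 ⟨hk.1, hk.2.trans (Nat.le_succ _)⟩)
      exact ⟨c, (mem_cells c).2 hc, X.sInf_entry_eq htop h2 hkc (by have := hk.2; omega)⟩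
  row_lt i j1 j2 hj h := by
    have hmin1 := X.sInf_entry_mem htop h2 (μ.up_left_mem le_rfl hj.le h)
    have hmin2 := X.sInf_entry_mem htop h2 h
    refine lt_of_le_of_ne (X.row_le i j1 j2 hj h _ hmin1.1 _ hmin2.1) fun he => hj.ne ?_
    exact congrArg Prod.snd (X.eq_of_mem_entry hmin1.1 (he ▸ hmin2.1))
  col_lt i1 i2 j hi h :=
    X.col_lt i1 i2 j hi h _ (X.sInf_entry_mem htop h2 (μ.up_left_mem hi.le le_rfl h)).1 _
      (X.sInf_entry_mem htop h2 h).1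

theorem ofSYT_toSYT (X : SBSVT μ) (htop : μ.card + 1 ∈ X.entry d)
    (h2 : (X.entry d).card = 2) (hd : d ∈ μ.corners) : ofSYT hd (X.toSYT htop h2) = X :=
  ext_of_mem fun c hc => by
    obtain ⟨a, ha, he⟩ := X.exists_entry_eq htop h2 hc
    have hmem : a ∈ X.entry c := by
      rw [he]
      split_ifs <;> simp
    change entryOfSYT (X.toSYT htop h2) d c = X.entry c
    rw [entryOfSYT, if_pos hc]
    change (if c = d then {sInf (X.entry c : Set ℕ), μ.card + 1}
      else {sInf (X.entry c : Set ℕ)}) = _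
    rw [X.sInf_entry_eq htop h2 hmem (by omega), he]

theorem le_card_of_mem_eraseCell_entry (hd : d ∈ μ.corners) (S : SBSVT (μ.eraseCell d))
    (ha : a ∈ S.entry c) : a ≤ μ.card :=
  card_eraseCell_add_one hd ▸ S.le_card_add_one ha

def extend (hd : d ∈ μ.corners) (S : SBSVT (μ.eraseCell d)) : SBSVT μ where
  entry c := if c = d then {μ.card + 1} else S.entry c
  outside c hc := by
    rw [if_neg (ne_of_mem_of_not_mem (mem_of_mem_corners hd) hc).symm]
    exact S.outside c fun h => hc ((mem_eraseCell hd).1 h).2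
  nonempty c hc := by
    split_ifs with hcd
    · exact singleton_nonempty _
    · exact S.nonempty c ((mem_eraseCell hd).2 ⟨hcd, hc⟩)
  card_le c hc := by
    split_ifs with hcd
    · simp
    · exact S.card_le c ((mem_eraseCell hd).2 ⟨hcd, hc⟩)
  unique_double := by
    obtain ⟨c, ⟨hc, hc2⟩, huniq⟩ := S.unique_double
    obtain ⟨hcd, hcμ⟩ := (mem_eraseCell hd).1 hc
    refine ⟨c, ⟨hcμ, by rwa [if_neg hcd]⟩, fun c' ⟨hc'μ, hc'2⟩ => ?_⟩
    split_ifs at hc'2 with hc'd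
    · simp at hc'2
    · exact huniq c' ⟨(mem_eraseCell hd).2 ⟨hc'd, hc'μ⟩, hc'2⟩
  mem_range c _ a ha := by
    split_ifs at ha
    · rw [mem_singleton.1 ha]
      exact mem_Icc.2 ⟨le_add_self, le_rfl⟩
    · exact mem_Icc.2 ⟨(mem_Icc.1 (S.mem_Icc_of_mem_entry ha)).1,
        (le_card_of_mem_eraseCell_entry hd S ha).trans (Nat.le_succ _)⟩
  exactly_once k hk := by
    rcases eq_or_ne k (μ.card + 1) with rfl | hk'
    · refine ⟨d, ⟨mem_of_mem_corners hd, by simp⟩, fun c ⟨_, hc⟩ => by_contra fun hcd => ?_⟩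
      rw [if_neg hcd] at hc
      have := le_card_of_mem_eraseCell_entry hd S hc
      omega
    · have hk'' : k ∈ Icc 1 ((μ.eraseCell d).card + 1) := by
        rw [card_eraseCell_add_one hd]
        rw [mem_Icc] at hk ⊢
        omega
      obtain ⟨c, ⟨hc, hkc⟩, huniq⟩ := S.exactly_once k hk''
      obtain ⟨hcd, hcμ⟩ := (mem_eraseCell hd).1 hc
      refine ⟨c, ⟨hcμ, by rwa [if_neg hcd]⟩, fun c' ⟨hc'μ, hkc'⟩ => ?_⟩
      split_ifs at hkc' with hc'd
      · exact absurd (mem_singleton.1 hkc') hk'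
      · exact huniq c' ⟨S.mem_of_mem_entry hkc', hkc'⟩
  row_le i j1 j2 hj h a ha b hb := by
    rw [if_neg (ne_of_lt_of_mem_corners hd h (Prod.mk_lt_mk_iff_right.2 hj))] at ha
    split_ifs at hb with hd'
    · rw [mem_singleton.1 hb]
      exact (le_card_of_mem_eraseCell_entry hd S ha).trans (Nat.le_succ _)
    · exact S.row_le i j1 j2 hj ((mem_eraseCell hd).2 ⟨hd', h⟩) a ha b hb
  col_lt i1 i2 j hi h a ha b hb := by
    rw [if_neg (ne_of_lt_of_mem_corners hd h (Prod.mk_lt_mk_iff_left.2 hi))] at ha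
    split_ifs at hb with hd'
    · rw [mem_singleton.1 hb]
      exact Nat.lt_succ_of_le (le_card_of_mem_eraseCell_entry hd S ha)
    · exact S.col_lt i1 i2 j hi ((mem_eraseCell hd).2 ⟨hd', h⟩) a ha b hb

theorem top_mem_extend_entry_iff (hd : d ∈ μ.corners) (S : SBSVT (μ.eraseCell d)) :
    μ.card + 1 ∈ (extend hd S).entry c ↔ c = d := by
  refine ⟨fun h => by_contra fun hcd => ?_, fun h => by simp [extend, h]⟩
  have := le_card_of_mem_eraseCell_entry hd S (c := c) (by simpa [extend, hcd] using h)
  omega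

theorem extend_injective (hd : d ∈ μ.corners) : Function.Injective (extend (μ := μ) hd) :=
  fun S S' h => ext_of_mem fun c hc => by
    have := congrArg (fun X => X.entry c) h
    simpa only [extend, if_neg ((mem_eraseCell hd).1 hc).1] using this

def restrict (hd : d ∈ μ.corners) (X : SBSVT μ) (hX : X.entry d = {μ.card + 1}) :
    SBSVT (μ.eraseCell d) where
  entry c := if c = d then ∅ else X.entry c
  outside c hc := by
    split_ifs with hcd
    · rfl
    · exact X.outside c fun h => hc ((mem_eraseCell hd).2 ⟨hcd, h⟩)
  nonempty c hc := by
    obtain ⟨hcd, hc⟩ := (mem_eraseCell hd).1 hc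
    rw [if_neg hcd]
    exact X.nonempty c hc
  card_le c hc := by
    obtain ⟨hcd, hc⟩ := (mem_eraseCell hd).1 hc
    rw [if_neg hcd]
    exact X.card_le c hc
  unique_double := by
    obtain ⟨c, ⟨hc, hc2⟩, huniq⟩ := X.unique_double
    have hcd : c ≠ d := by
      rintro rfl
      simp [hX] at hc2
    refine ⟨c, ⟨(mem_eraseCell hd).2 ⟨hcd, hc⟩, by rwa [if_neg hcd]⟩, fun c' ⟨hc', hc'2⟩ => ?_⟩
    obtain ⟨hc'd, hc'⟩ := (mem_eraseCell hd).1 hc'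
    rw [if_neg hc'd] at hc'2
    exact huniq c' ⟨hc', hc'2⟩
  mem_range c hc a ha := by
    obtain ⟨hcd, hc⟩ := (mem_eraseCell hd).1 hc
    rw [if_neg hcd] at ha
    have hne : a ≠ μ.card + 1 := fun h => hcd (X.eq_of_mem_entry ha (by simp [hX, h]))
    have := X.mem_Icc_of_mem_entry ha
    rw [mem_Icc] at this ⊢
    have := card_eraseCell_add_one hd
    omega
  exactly_once k hk := by
    have hcard := card_eraseCell_add_one hd
    rw [mem_Icc] at hk
    obtain ⟨c, ⟨hc, hkc⟩, huniq⟩ := X.exactly_once k (mem_Icc.2 ⟨hk.1, by omega⟩)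
    have hcd : c ≠ d := by
      rintro rfl
      rw [hX, mem_singleton] at hkc
      omega
    refine ⟨c, ⟨(mem_eraseCell hd).2 ⟨hcd, hc⟩, by rwa [if_neg hcd]⟩, fun c' ⟨hc', hkc'⟩ => ?_⟩
    obtain ⟨hc'd, hc'⟩ := (mem_eraseCell hd).1 hc'
    rw [if_neg hc'd] at hkc'
    exact huniq c' ⟨hc', hkc'⟩
  row_le i j1 j2 hj h a ha b hb := by
    obtain ⟨hd', h⟩ := (mem_eraseCell hd).1 h
    rw [if_neg (ne_of_lt_of_mem_corners hd h (Prod.mk_lt_mk_iff_right.2 hj))] at ha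
    rw [if_neg hd'] at hb
    exact X.row_le i j1 j2 hj h a ha b hb
  col_lt i1 i2 j hi h a ha b hb := by
    obtain ⟨hd', h⟩ := (mem_eraseCell hd).1 h
    rw [if_neg (ne_of_lt_of_mem_corners hd h (Prod.mk_lt_mk_iff_left.2 hi))] at ha
    rw [if_neg hd'] at hb
    exact X.col_lt i1 i2 j hi h a ha b hb

theorem extend_restrict (hd : d ∈ μ.corners) (X : SBSVT μ) (hX : X.entry d = {μ.card + 1}) :
    extend hd (restrict hd X hX) = X :=
  ext_of_mem fun c _ => by
    change (if c = d then {μ.card + 1} else if c = d then ∅ else X.entry c) = X.entry c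
    split_ifs with h
    · rw [h, hX]
    · rfl

theorem card_eq_sum_corners (μ : YoungDiagram) :
    Nat.card (SBSVT μ) =
      ∑ d ∈ μ.corners, (Nat.card (SYT μ) + Nat.card (SBSVT (μ.eraseCell d))) := by
  let F : (Σ d : μ.corners, SYT μ ⊕ SBSVT (μ.eraseCell d)) → SBSVT μ :=
    fun p => Sum.elim (ofSYT p.1.2) (extend p.1.2) p.2
  have htop : ∀ p c, μ.card + 1 ∈ (F p).entry c ↔ c = p.1 := by
    rintro ⟨⟨d, hd⟩, T | S⟩ c
    exacts [top_mem_ofSYT_entry_iff hd T, top_mem_extend_entry_iff hd S]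
  simp_rw [← Nat.card_sum]
  refine Nat.card_eq_sum_of_bijective_sigma (F := F) ⟨?_, fun X => ?_⟩
  · refine Function.injective_sigma_of_fst
      (fun p q h => Subtype.ext ((htop q p.1).1 (h ▸ (htop p p.1).2 rfl))) fun ⟨d, hd⟩ => ?_
    refine (ofSYT_injective hd).sumElim (extend_injective hd) fun T S h => ?_
    have hT := card_entryOfSYT_self T (mem_of_mem_corners hd)
    have hS : ((extend hd S).entry d).card = 1 := by simp [extend]
    have := congrArg (fun X => (X.entry d).card) h
    change (entryOfSYT T d d).card = ((extend hd S).entry d).card at this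
    omega
  · obtain ⟨d, ⟨-, htopd⟩, -⟩ := X.exactly_once (μ.card + 1) (mem_Icc.2 ⟨le_add_self, le_rfl⟩)
    have hd := X.mem_corners_of_top_mem htopd
    by_cases h2 : (X.entry d).card = 2
    · exact ⟨⟨⟨d, hd⟩, Sum.inl (X.toSYT htopd h2)⟩, X.ofSYT_toSYT htopd h2 hd⟩
    · have hX : X.entry d = {μ.card + 1} := by
        have := X.card_le d (mem_of_mem_corners hd)
        have := card_pos.2 (X.nonempty d (mem_of_mem_corners hd))
        obtain ⟨a, ha⟩ := card_eq_one.1 (by omega : (X.entry d).card = 1)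
        rw [ha] at htopd ⊢
        rw [mem_singleton.1 htopd]
      exact ⟨⟨⟨d, hd⟩, Sum.inr (restrict hd X hX)⟩, extend_restrict hd X hX⟩

end SBSVT

section Recurrence

open scoped Classical

variable {μ : YoungDiagram} {c d : ℕ × ℕ}

theorem card_syt_addCell (hc : c ∈ μ.outerCorners) :
    Nat.card (SYT (addCell μ c)) = Nat.card (SYT μ) +
      ∑ d ∈ μ.corners with ¬d ⋖ c, Nat.card (SYT (addCell (μ.eraseCell d) c)) := by
  have hcμ := (mem_outerCorners.1 hc).1
  rw [SYT.card_eq_sum_corners (by rw [card_addCell hc]; exact Nat.succ_pos _), corners_addCell hc,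
    sum_insert fun h => hcμ (mem_of_mem_corners (mem_filter.1 h).1), eraseCell_addCell hc]
  congr 1
  refine sum_congr rfl fun d hd => ?_
  rw [eraseCell_addCell_comm hc (mem_filter.1 hd).1 (mem_filter.1 hd).2]

theorem sum_outerCorners_eraseCell (hd : d ∈ μ.corners) :
    ∑ c ∈ (μ.eraseCell d).outerCorners, c.1 * Nat.card (SYT (addCell (μ.eraseCell d) c)) =
      d.1 * Nat.card (SYT μ) +
        ∑ c ∈ μ.outerCorners with ¬d ⋖ c, c.1 * Nat.card (SYT (addCell (μ.eraseCell d) c)) := by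
  rw [outerCorners_eraseCell hd, sum_insert fun h => (mem_outerCorners.1 (mem_filter.1 h).1).1
    (mem_of_mem_corners hd), addCell_eraseCell hd]

theorem card_sbsvt_eq_sum_outerCorners (μ : YoungDiagram) :
    Nat.card (SBSVT μ) = ∑ c ∈ μ.outerCorners, c.1 * Nat.card (SYT (addCell μ c)) := by
  induction hn : μ.card using Nat.strong_induction_on generalizing μ with
  | _ n ih =>
  calc Nat.card (SBSVT μ)
      = ∑ d ∈ μ.corners, (Nat.card (SYT μ) + Nat.card (SBSVT (μ.eraseCell d))) :=
        SBSVT.card_eq_sum_corners μ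
    _ = ∑ d ∈ μ.corners, ((d.1 + 1) * Nat.card (SYT μ) +
          ∑ c ∈ μ.outerCorners with ¬d ⋖ c, c.1 * Nat.card (SYT (addCell (μ.eraseCell d) c))) :=
        sum_congr rfl fun d hd => by
          rw [ih _ (by have := card_eraseCell_add_one hd; omega) _ rfl,
            sum_outerCorners_eraseCell hd]
          ring
    _ = ∑ c ∈ μ.outerCorners, (c.1 * Nat.card (SYT μ) +
          ∑ d ∈ μ.corners with ¬d ⋖ c, c.1 * Nat.card (SYT (addCell (μ.eraseCell d) c))) := by
        rw [sum_add_distrib, sum_add_distrib, ← sum_mul, ← sum_mul, sum_fst_outerCorners,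
          sum_comm' (t' := μ.outerCorners) (s' := fun c => {d ∈ μ.corners | ¬d ⋖ c})
            fun d c => by simp only [mem_filter]; tauto]
    _ = ∑ c ∈ μ.outerCorners, c.1 * Nat.card (SYT (addCell μ c)) :=
        sum_congr rfl fun c hc => by rw [card_syt_addCell hc, mul_add, mul_sum]

end Recurrence

-- Cells are 0-indexed, so the paper's coefficient `i - 1` is the row index `c.1`.
/-- `f^λ(+1) = Σ_{x=(i,j)} (i-1) · f^{λ∪{x}}`, the sum over outside corner cells `x` of
`λ` (here 0-indexed, so the 1-indexed coefficient `i-1` equals the 0-indexed row `c.1`). -/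
theorem stmt7 (μ : YoungDiagram) :
    Nat.card (SBSVT μ) =
      ∑ᶠ c ∈ {c : ℕ × ℕ | c ∉ μ ∧ IsLowerSet (insert c (μ.cells : Set (ℕ × ℕ)))},
        c.1 * Nat.card (SYT (addCell μ c)) := by
  have hset : {c : ℕ × ℕ | c ∉ μ ∧ IsLowerSet (insert c (μ.cells : Set (ℕ × ℕ)))} =
      μ.outerCorners := by
    ext c
    exact mem_outerCorners.symm
  rw [hset, finsum_mem_coe_finset]
  exact card_sbsvt_eq_sum_outerCorners μ
end

section
/- For positive integers a, b and d ≥ 1, the hypergeometric identity Σ_{i=1}^{d−1} a·i · ((b/(a+b))_i / i!) · ((a/(a+b))_{d−1−i} / (d−1−i)!) = (d−1)ab/(a+b) holds, where (z)_j denotes the rising factorial z(z+1)⋯(z+j−1). -/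
/-!
Since `i * (x)_i / i! = x * (x + 1)_(i-1) / (i-1)!`, the weighted sum is `x` times a
Chu–Vandermonde convolution, equal to `x * (x + 1 + y)_(d-2) / (d-2)!`. For `x = b/(a+b)` and
`y = a/(a+b)` this is `x * (2)_(d-2) / (d-2)! = x * (d - 1)`. Vandermonde for rising factorials
comes from Mathlib's version for falling factorials through `(r)_n = (-1)^n * (descPochhammer n).eval (-r)`.
-/

open Finset Polynomial Nat

namespace Polynomial

section CommRing

variable {R : Type*} [CommRing R]

theorem descPochhammer_smeval_eq_eval (r : R) (n : ℕ) :
    (descPochhammer ℤ n).smeval r = (descPochhammer R n).eval r := by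
  rw [← aeval_eq_smeval, aeval_def, ← eval_map, descPochhammer_map]

theorem descPochhammer_eval_add (r s : R) (n : ℕ) :
    (descPochhammer R n).eval (r + s) = ∑ ij ∈ antidiagonal n,
      n.choose ij.1 * ((descPochhammer R ij.1).eval r * (descPochhammer R ij.2).eval s) := by
  simpa only [descPochhammer_smeval_eq_eval] using
    Ring.descPochhammer_smeval_add n (Commute.all r s)

theorem ascPochhammer_eval_eq_neg_one_pow_mul_descPochhammer (r : R) (n : ℕ) :
    (ascPochhammer R n).eval r = (-1) ^ n * (descPochhammer R n).eval (-r) := by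
  rw [← ascPochhammer_eval_neg_eq_descPochhammer, neg_neg]

theorem ascPochhammer_eval_add (r s : R) (n : ℕ) :
    (ascPochhammer R n).eval (r + s) = ∑ ij ∈ antidiagonal n,
      n.choose ij.1 * ((ascPochhammer R ij.1).eval r * (ascPochhammer R ij.2).eval s) := by
  simp only [ascPochhammer_eval_eq_neg_one_pow_mul_descPochhammer, neg_add,
    descPochhammer_eval_add, mul_sum]
  refine sum_congr rfl fun ij hij => ?_
  rw [← mem_antidiagonal.mp hij]
  ring

end CommRing

section Field

variable {K : Type*} [Field K] [CharZero K]

theorem ascPochhammer_eval_add_div_factorial (x y : K) (n : ℕ) :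
    (ascPochhammer K n).eval (x + y) / n ! = ∑ ij ∈ antidiagonal n,
      (ascPochhammer K ij.1).eval x / ij.1 ! * ((ascPochhammer K ij.2).eval y / ij.2 !) := by
  rw [ascPochhammer_eval_add, sum_div]
  refine sum_congr rfl fun ij hij => ?_
  obtain rfl := mem_antidiagonal.mp hij
  have := cast_ne_zero (R := K) |>.mpr (ij.1 + ij.2).factorial_ne_zero
  rw [cast_add_choose]
  field_simp

theorem mul_ascPochhammer_eval_succ_div_factorial (x : K) (n : ℕ) :
    (n + 1 : K) * ((ascPochhammer K (n + 1)).eval x / (n + 1)!) =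
      x * ((ascPochhammer K n).eval (x + 1) / n !) := by
  rw [ascPochhammer_succ_left, eval_mul, eval_X, eval_comp, eval_add, eval_X, eval_one,
    factorial_succ, cast_mul]
  have := cast_ne_zero (R := K) |>.mpr n.factorial_ne_zero
  field_simp
  push_cast
  ring

theorem sum_antidiagonal_mul_ascPochhammer_eval_div_factorial (x y : K) (n : ℕ) :
    ∑ ij ∈ antidiagonal (n + 1), (ij.1 : K) *
        ((ascPochhammer K ij.1).eval x / ij.1 ! * ((ascPochhammer K ij.2).eval y / ij.2 !)) =
      x * ((ascPochhammer K n).eval (x + 1 + y) / n !) := by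
  rw [ascPochhammer_eval_add_div_factorial, mul_sum, Nat.sum_antidiagonal_succ]
  simp only [cast_zero, zero_mul, zero_add, cast_succ, ← mul_assoc,
    mul_ascPochhammer_eval_succ_div_factorial]

theorem ascPochhammer_eval_two_div_factorial (n : ℕ) :
    (ascPochhammer K n).eval 2 / n ! = n + 1 := by
  have h := factorial_mul_ascPochhammer K 1 n
  rw [factorial_one, cast_one, one_mul, one_add_one_eq_two, add_comm, factorial_succ,
    cast_mul] at h
  rw [h, mul_div_assoc, div_self (cast_ne_zero.mpr n.factorial_ne_zero), mul_one, cast_succ]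

end Field

end Polynomial

theorem stmt13_general (a b : ℕ) (ha : 0 < a) (d : ℕ) (hd : 1 ≤ d) :
    ∑ i ∈ Finset.Icc 1 (d - 1),
        (a : ℚ) * i *
          ((ascPochhammer ℚ i).eval ((b : ℚ) / (a + b)) / (Nat.factorial i : ℚ)) *
          ((ascPochhammer ℚ (d - 1 - i)).eval ((a : ℚ) / (a + b)) /
            (Nat.factorial (d - 1 - i) : ℚ)) =
      ((d : ℚ) - 1) * a * b / (a + b) := by
  obtain ⟨n, rfl⟩ : ∃ n, d = n + 1 := ⟨d - 1, by omega⟩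
  have hab : (a + b : ℚ) ≠ 0 := by positivity
  set x : ℚ := b / (a + b) with hx
  set y : ℚ := a / (a + b) with hy
  have hxy : x + 1 + y = 2 := by
    rw [hx, hy]
    field_simp
    ring
  have hsum : ∑ i ∈ Icc 1 n, (a : ℚ) * i * ((ascPochhammer ℚ i).eval x / i !) *
      ((ascPochhammer ℚ (n - i)).eval y / (n - i)!) = a * ∑ ij ∈ antidiagonal n, (ij.1 : ℚ) *
        ((ascPochhammer ℚ ij.1).eval x / ij.1 ! * ((ascPochhammer ℚ ij.2).eval y / ij.2 !)) := by
    rw [Nat.sum_antidiagonal_eq_sum_range_succ_mk, mul_sum]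
    refine (sum_subset (s₂ := range (n + 1)) (fun i hi => ?_) fun i hr hi => ?_).trans
      (sum_congr rfl fun i _ => by ring)
    · simp only [mem_Icc, mem_range] at hi ⊢
      omega
    · obtain rfl : i = 0 := by
        simp only [mem_Icc, mem_range, not_and_or] at hr hi
        omega
      simp
  rw [add_tsub_cancel_right, hsum]
  rcases n with _ | m
  · simp
  · rw [sum_antidiagonal_mul_ascPochhammer_eval_div_factorial, hxy,
      ascPochhammer_eval_two_div_factorial]
    rw [hx]
    field_simp
    push_cast
    ring

/-- The hypergeometric (Chu–Vandermonde) identity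
`Σ_{i=1}^{d-1} a·i · ((b/(a+b))_i / i!) · ((a/(a+b))_{d-1-i} / (d-1-i)!) = (d-1)ab/(a+b)`,
where `(z)_j` is the rising factorial (Pochhammer symbol). -/
theorem stmt13 (a b : ℕ) (ha : 0 < a) (hb : 0 < b) (d : ℕ) (hd : 1 ≤ d) :
    ∑ i ∈ Finset.Icc 1 (d - 1),
        (a : ℚ) * i *
          ((ascPochhammer ℚ i).eval ((b : ℚ) / (a + b)) / (Nat.factorial i : ℚ)) *
          ((ascPochhammer ℚ (d - 1 - i)).eval ((a : ℚ) / (a + b)) /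
            (Nat.factorial (d - 1 - i) : ℚ)) =
      ((d : ℚ) - 1) * a * b / (a + b) :=
  stmt13_general a b ha d hd
end

section
/- Let P be a finite forest poset (each element covered by at most one element). Then the number of linear extensions of P equals (#P)! divided by the product over i ∈ P of #P_{≤i}, where P_{≤i} = {j ∈ P : j ≤_P i}. -/
/-!
If `m` is the element in the last position of a linear extension of `P`, then `m` is maximal
and the remaining positions form a linear extension of `P ∖ {m}`; conversely every maximal `m`
can be put last. So `e(P) = ∑ e(P ∖ {m})` over the maximal `m`. Since `m` is maximal it lies in
no other down-set `P_{≤ i}`, so the hook product `H` satisfies `H(P) = #P_{≤ m} · H(P ∖ {m})`,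
and by induction `e(P) · H(P) = (n - 1)! · ∑ #P_{≤ m}`. In a forest the up-set of every
element is a chain, so each element lies below exactly one maximal element: the down-sets of
the maximal elements partition `P` and the sum is `n`.
-/

section Forest

variable {P : Type*} [PartialOrder P]

theorem isChain_Ici_of_subsingleton_covBy [Finite P] (h : ∀ a : P, {b | a ⋖ b}.Subsingleton)
    (a : P) : IsChain (· ≤ ·) (Set.Ici a) := by
  induction a using WellFoundedGT.induction with
  | _ a ih =>
  intro b (hab : a ≤ b) c (hac : a ≤ c) hbc
  rcases hab.eq_or_lt with rfl | hab
  · exact Or.inl hac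
  rcases hac.eq_or_lt with rfl | hac
  · exact Or.inr hab.le
  obtain ⟨x, hax, hxb⟩ := exists_covBy_le_of_lt hab
  obtain ⟨y, hay, hyc⟩ := exists_covBy_le_of_lt hac
  obtain rfl := h a hax hay
  exact ih x hax.lt hxb hyc hbc

theorem isChain_Ici_subtype {p : P → Prop} (h : ∀ a : P, IsChain (· ≤ ·) (Set.Ici a))
    (a : Subtype p) : IsChain (· ≤ ·) (Set.Ici a) :=
  fun _ hb _ hc hbc => h a.1 hb hc (Subtype.coe_injective.ne hbc)

theorem eq_of_le_of_le_of_isMax (h : ∀ a : P, IsChain (· ≤ ·) (Set.Ici a)) {a m m' : P}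
    (hm : IsMax m) (hm' : IsMax m') (ha : a ≤ m) (ha' : a ≤ m') : m = m' := by
  by_contra hne
  rcases h a ha ha' hne with hle | hle
  · exact hne (hle.antisymm (hm hle))
  · exact hne ((hm' hle).antisymm hle)

open scoped Classical in
theorem sum_ncard_Iic_isMax [Fintype P] (h : ∀ a : P, IsChain (· ≤ ·) (Set.Ici a)) :
    ∑ m : {m : P // IsMax m}, {j : P | j ≤ m.1}.ncard = Fintype.card P := by
  have hbij :
      Function.Bijective fun x : Σ m : {m : P // IsMax m}, {j : P // j ≤ m.1} => x.2.1 := by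
    refine ⟨?_, fun a => ?_⟩
    · rintro ⟨m, j, hj⟩ ⟨m', j', hj'⟩ (rfl : j = j')
      obtain rfl := Subtype.ext (eq_of_le_of_le_of_isMax h m.2 m'.2 hj hj')
      rfl
    · obtain ⟨m, ham, hm⟩ := Finite.exists_le_maximal (p := fun _ : P => True) trivial
      exact ⟨⟨⟨m, fun _ hb => hm.2 trivial hb⟩, a, ham⟩, rfl⟩
  rw [← Nat.card_eq_fintype_card, ← Nat.card_eq_of_bijective _ hbij, Nat.card_sigma]
  exact Finset.sum_congr rfl fun m _ => (Nat.card_coe_set_eq {j : P | j ≤ m.1}).symm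

theorem prod_ncard_Iic_of_isMax [Fintype P] [DecidableEq P] {m : P} (hm : IsMax m) :
    ∏ i : P, {j : P | j ≤ i}.ncard =
      {j : P | j ≤ m}.ncard * ∏ i : {p : P // p ≠ m}, {j : {p : P // p ≠ m} | j ≤ i}.ncard := by
  rw [Fintype.prod_eq_mul_prod_compl m, Finset.prod_subtype (p := (· ≠ m)) _ (fun _ => by simp)]
  congr 1
  refine Finset.prod_congr rfl fun i _ => ?_
  rw [← Set.ncard_image_of_injective _ Subtype.val_injective]
  congr 1
  ext j
  refine ⟨fun hj => ⟨⟨j, ?_⟩, hj, rfl⟩, by rintro ⟨j, hj, rfl⟩; exact hj⟩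
  rintro rfl
  exact i.2 (hm.eq_of_le hj).symm

end Forest

section ExtendByLast

variable {P : Type*} {n : ℕ} {m : P}

def restrictOfLast (f : P ≃ Fin (n + 1)) (hf : f m = Fin.last n) : {p // p ≠ m} ≃ Fin n :=
  (f.subtypeEquiv fun _ => hf ▸ f.injective.ne_iff.symm).trans
    (finSuccAboveEquiv (Fin.last n)).symm

@[simp]
theorem castSucc_restrictOfLast (f : P ≃ Fin (n + 1)) (hf : f m = Fin.last n)
    (p : {p // p ≠ m}) : (restrictOfLast f hf p).castSucc = f p := by
  simp [restrictOfLast, finSuccAboveEquiv_symm_apply_last]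

variable [DecidableEq P]

def extendByLast (m : P) (g : {p // p ≠ m} ≃ Fin n) : P ≃ Fin (n + 1) :=
  (Equiv.optionSubtypeNe m).symm.trans (g.optionCongr.trans finSuccEquivLast.symm)

@[simp]
theorem extendByLast_self (g : {p // p ≠ m} ≃ Fin n) : extendByLast m g m = Fin.last n := by
  simp [extendByLast]

theorem extendByLast_of_ne (g : {p // p ≠ m} ≃ Fin n) {p : P} (hp : p ≠ m) :
    extendByLast m g p = (g ⟨p, hp⟩).castSucc := by
  simp [extendByLast, Equiv.optionSubtypeNe_symm_of_ne hp]

theorem extendByLast_restrictOfLast (f : P ≃ Fin (n + 1)) (hf : f m = Fin.last n) :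
    extendByLast m (restrictOfLast f hf) = f := by
  ext1 p
  by_cases hp : p = m
  · rw [hp, extendByLast_self, hf]
  · rw [extendByLast_of_ne _ hp, castSucc_restrictOfLast]

theorem restrictOfLast_extendByLast (g : {p // p ≠ m} ≃ Fin n) :
    restrictOfLast (extendByLast m g) (extendByLast_self g) = g := by
  ext1 p
  apply Fin.castSucc_injective
  rw [castSucc_restrictOfLast, extendByLast_of_ne _ p.2]

end ExtendByLast

section LinearExtensions

variable {P : Type*} [PartialOrder P] {n : ℕ}

abbrev LinearExtensions (P : Type*) [Preorder P] (n : ℕ) := {f : P ≃ Fin n // Monotone f}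

theorem isMax_symm_last {f : P ≃ Fin (n + 1)} (hf : Monotone f) : IsMax (f.symm (Fin.last n)) :=
  fun q hq => by
    have hq' : f q = Fin.last n := Fin.last_le_iff.mp (by simpa using hf hq)
    rw [← hq', f.symm_apply_apply]

theorem monotone_restrictOfLast {m : P} {f : P ≃ Fin (n + 1)} (hf : f m = Fin.last n)
    (hmono : Monotone f) : Monotone (restrictOfLast f hf) := fun p q hpq => by
  rw [← Fin.castSucc_le_castSucc_iff, castSucc_restrictOfLast, castSucc_restrictOfLast]
  exact hmono hpq

def topOfLinearExtension (f : LinearExtensions P (n + 1)) : {m : P // IsMax m} :=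
  ⟨f.1.symm (Fin.last n), isMax_symm_last f.2⟩

theorem topOfLinearExtension_eq_iff {f : LinearExtensions P (n + 1)} {m : {m : P // IsMax m}} :
    topOfLinearExtension f = m ↔ f.1 m = Fin.last n := by
  rw [topOfLinearExtension, Subtype.ext_iff, Equiv.symm_apply_eq, eq_comm]

variable [DecidableEq P]

theorem monotone_extendByLast {m : P} (hm : IsMax m) {g : {p // p ≠ m} ≃ Fin n}
    (hg : Monotone g) : Monotone (extendByLast m g) := by
  intro p q hpq
  by_cases hq : q = m
  · rw [hq, extendByLast_self]
    exact Fin.le_last _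
  have hp : p ≠ m := by
    rintro rfl
    exact hq (hm.eq_of_le hpq).symm
  rw [extendByLast_of_ne _ hp, extendByLast_of_ne _ hq, Fin.castSucc_le_castSucc_iff]
  exact hg (show (⟨p, hp⟩ : {p // p ≠ m}) ≤ ⟨q, hq⟩ from hpq)

def linearExtensionsFiberEquiv (m : {m : P // IsMax m}) :
    {f : LinearExtensions P (n + 1) // topOfLinearExtension f = m} ≃
      LinearExtensions {p // p ≠ m.1} n where
  toFun f := ⟨restrictOfLast f.1.1 (topOfLinearExtension_eq_iff.mp f.2),
    monotone_restrictOfLast _ f.1.2⟩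
  invFun g := ⟨⟨extendByLast m g.1, monotone_extendByLast m.2 g.2⟩,
    topOfLinearExtension_eq_iff.mpr (extendByLast_self _)⟩
  left_inv f := by
    ext1; ext1
    exact extendByLast_restrictOfLast _ (topOfLinearExtension_eq_iff.mp f.2)
  right_inv g := by
    ext1
    exact restrictOfLast_extendByLast _

def linearExtensionsEquivSigma :
    LinearExtensions P (n + 1) ≃ Σ m : {m : P // IsMax m}, LinearExtensions {p // p ≠ m.1} n :=
  (Equiv.sigmaFiberEquiv topOfLinearExtension).symm.trans
    (Equiv.sigmaCongrRight linearExtensionsFiberEquiv)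

end LinearExtensions

open Nat in
theorem card_linearExtensions_mul_prod_ncard_Iic {P : Type*} [PartialOrder P] [Fintype P]
    (hP : ∀ a : P, IsChain (· ≤ ·) (Set.Ici a)) {n : ℕ} (hn : Fintype.card P = n) :
    Nat.card (LinearExtensions P n) * ∏ i : P, {j : P | j ≤ i}.ncard = n ! := by
  classical
  induction n generalizing P with
  | zero =>
    have : IsEmpty P := Fintype.card_eq_zero_iff.mp hn
    rw [Finset.univ_eq_empty, Finset.prod_empty, mul_one, Nat.factorial_zero,
      Nat.card_eq_one_iff_unique]
    exact ⟨inferInstance, ⟨⟨Equiv.equivOfIsEmpty _ _, fun a => isEmptyElim a⟩⟩⟩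
  | succ n ih =>
    have hcard (m : P) : Fintype.card {p // p ≠ m} = n := by
      simp [Fintype.card_subtype_compl, hn]
    calc Nat.card (LinearExtensions P (n + 1)) * ∏ i : P, {j : P | j ≤ i}.ncard
        = ∑ m : {m : P // IsMax m}, {j : P | j ≤ m.1}.ncard *
            (Nat.card (LinearExtensions {p // p ≠ m.1} n) *
              ∏ i : {p // p ≠ m.1}, {j | j ≤ i}.ncard) := by
          rw [Nat.card_congr linearExtensionsEquivSigma, Nat.card_sigma, Finset.sum_mul]
          refine Finset.sum_congr rfl fun m _ => ?_
          rw [prod_ncard_Iic_of_isMax m.2]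
          ring
      _ = ∑ m : {m : P // IsMax m}, {j : P | j ≤ m.1}.ncard * n ! := by
          simp_rw [ih (isChain_Ici_subtype hP) (hcard _)]
      _ = (n + 1)! := by
          rw [← Finset.sum_mul, sum_ncard_Iic_isMax hP, hn, Nat.factorial_succ]

/-- Knuth's hook-length formula for forests: if `P` is a finite forest poset (every
element is covered by at most one element), then the number of linear extensions of `P`
(order-preserving bijections to the chain `0 < 1 < … < #P - 1`) equals
`(#P)! / Π_{i ∈ P} #P_{≤ i}`. -/
theorem stmt14 (P : Type*) [PartialOrder P] [Fintype P]
    (hforest : ∀ p : P, ({q : P | p ⋖ q}).ncard ≤ 1) :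
    (Nat.card {f : P ≃ Fin (Fintype.card P) // Monotone ⇑f} : ℚ) =
      (Nat.factorial (Fintype.card P) : ℚ) /
        ∏ i : P, (({j : P | j ≤ i}).ncard : ℚ) := by
  have hP := isChain_Ici_of_subsingleton_covBy fun p =>
    Set.ncard_le_one_iff_subsingleton.mp (hforest p)
  have hprod : ∏ i : P, ({j : P | j ≤ i}.ncard : ℚ) ≠ 0 :=
    Finset.prod_ne_zero_iff.mpr fun i _ => Nat.cast_ne_zero.mpr (Set.ncard_ne_zero_of_mem le_rfl)
  rw [eq_div_iff hprod]
  exact_mod_cast card_linearExtensions_mul_prod_ncard_Iic hP rfl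
end

section
/- Let P be a finite forest poset and i ⋖ j a covering relation in P. Let P/{i,j} be the quotient poset merging i and j. Then #L(P/{i,j}) / #L(P) = (#P_{≤i}/#P) · Π_{k >_P i} ( #P_{≤k} / (#P_{≤k} − 1) ), where L(·) denotes the set of linear extensions. -/
/-!
In a forest the elements above `i` are its cover `j` and the elements above `j`, and everything
below `i` is below `j`. Hence merging `i` into `j` yields a poset isomorphic to `P ∖ {i}`, the
isomorphism being the transposition of `i` and `j`. The hook length formula for forests, proved by
removing the element in last position (necessarily a root) and using that the down-sets of the
roots partition the forest, gives `#L(P) · ∏ #P_{≤k} = n!` and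
`#L(P ∖ {i}) · ∏ #(P_{≤k} ∖ {i}) = (n - 1)!`; deleting `i` shrinks exactly the hooks of the
`k > i`, each by one.
-/

open Finset Nat

/-- For finite posets, equivalent to every element having at most one upper cover. -/
def IsForest (α : Type*) [PartialOrder α] : Prop :=
  ∀ x : α, IsChain (· ≤ ·) (Set.Ici x)

section Forest

variable {α : Type*} [PartialOrder α]

theorem isForest_of_ncard_covBy_le_one [Finite α] (hα : ∀ p : α, {q | p ⋖ q}.ncard ≤ 1) :
    IsForest α := by
  intro x
  induction x using WellFoundedGT.induction with
  | _ x ih =>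
  intro a ha b hb _
  rcases (Set.mem_Ici.mp ha).eq_or_lt with rfl | hxa
  · exact Or.inl hb
  rcases (Set.mem_Ici.mp hb).eq_or_lt with rfl | hxb
  · exact Or.inr ha
  obtain ⟨c, hxc, hca⟩ := exists_covBy_le_of_lt hxa
  obtain ⟨c', hxc', hcb⟩ := exists_covBy_le_of_lt hxb
  obtain rfl : c = c' := (Set.ncard_le_one_iff (Set.toFinite _)).mp (hα x) hxc hxc'
  exact (ih c hxc.lt).total hca hcb

theorem IsForest.subtype (hα : IsForest α) (p : α → Prop) : IsForest {x // p x} :=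
  fun x _ ha _ hb _ => (hα x).total ha hb

theorem IsForest.le_iff_lt_of_covBy (hα : IsForest α) {i j k : α} (hij : i ⋖ j) :
    j ≤ k ↔ i < k := by
  refine ⟨hij.lt.trans_le, fun hik => ?_⟩
  rcases (hα i).total hik.le hij.le with hkj | hjk
  · rcases hij.eq_or_eq hik.le hkj with rfl | rfl
    · exact absurd hik (lt_irrefl _)
    · exact le_rfl
  · exact hjk

/-- The down-sets of the maximal elements partition a forest. -/
theorem IsForest.sum_ncard_Iic_isMax [Fintype α] [DecidablePred (IsMax : α → Prop)]
    (hα : IsForest α) :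
    ∑ m ∈ univ.filter (IsMax : α → Prop), (Set.Iic m).ncard = Fintype.card α := by
  classical
  have hdisj : (↑(univ.filter (IsMax : α → Prop)) : Set α).PairwiseDisjoint
      fun m => (Set.Iic m).toFinset := by
    intro m hm m' hm' hne
    refine Finset.disjoint_left.mpr fun q hqm hqm' => hne ?_
    simp only [Set.mem_toFinset, Set.mem_Iic] at hqm hqm'
    simp only [coe_filter, mem_univ, true_and, Set.mem_ofPred_eq] at hm hm'
    rcases (hα q).total hqm hqm' with h | h
    · exact hm.eq_of_le h
    · exact (hm'.eq_of_le h).symm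
  have hcover : (univ.filter (IsMax : α → Prop)).biUnion (fun m => (Set.Iic m).toFinset) =
      univ := by
    refine eq_univ_of_forall fun q => ?_
    obtain ⟨m, hqm, hm⟩ := Finite.exists_le_maximal (p := fun _ => True) (a := q) trivial
    simp only [mem_biUnion, mem_filter, mem_univ, true_and, Set.mem_toFinset, Set.mem_Iic]
    exact ⟨m, fun b hb => hm.2 trivial hb, hqm⟩
  simp only [Set.ncard_eq_toFinset_card']
  rw [← card_biUnion hdisj, hcover, Finset.card_univ]

end Forest

section HookLength

variable {α : Type*} {N : ℕ}

theorem ncard_Iic_subtype_ne [PartialOrder α] (m : α) (k : {p : α // p ≠ m}) :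
    (Set.Iic k).ncard = (Set.Iic (k : α) \ {m}).ncard := by
  rw [← Set.ncard_image_of_injective _ Subtype.val_injective]
  congr 1
  ext q
  constructor
  · rintro ⟨r, hr, rfl⟩
    exact ⟨hr, r.2⟩
  · rintro ⟨hq, hqm⟩
    exact ⟨⟨q, hqm⟩, hq, rfl⟩

theorem isMax_of_monotone_of_apply_eq_last [PartialOrder α] {f : α ≃ Fin (N + 1)}
    (hf : Monotone f) {m : α} (hm : f m = Fin.last N) : IsMax m :=
  (hf.strictMono_of_injective f.injective).isMax_of_apply (hm ▸ fun b _ => Fin.le_last b)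

def equivOfApplyEqLast [DecidableEq α] (m : α) :
    {f : α ≃ Fin (N + 1) // f m = Fin.last N} ≃ ({p // p ≠ m} ≃ Fin N) :=
  (((Equiv.optionSubtypeNe m).equivCongr (Equiv.refl _)).symm.subtypeEquiv
    (fun _ => by simp [Equiv.equivCongr])).trans
    ((Equiv.optionSubtype (Fin.last N)).trans
      ((Equiv.refl _).equivCongr (finSuccAboveEquiv (Fin.last N)).symm))

@[simp]
theorem val_equivOfApplyEqLast_apply [DecidableEq α] (m : α)
    (f : {f : α ≃ Fin (N + 1) // f m = Fin.last N}) (p : {p // p ≠ m}) :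
    (equivOfApplyEqLast m f p : ℕ) = (f.1 p : ℕ) := by
  simp [equivOfApplyEqLast, Equiv.equivCongr, finSuccAboveEquiv_symm_apply_last]

variable [PartialOrder α]

theorem card_monotone_eq_sum_card_apply_eq_last [Fintype α] :
    Nat.card {f : α ≃ Fin (N + 1) // Monotone f} =
      ∑ m, Nat.card {f : α ≃ Fin (N + 1) // f m = Fin.last N ∧ Monotone f} := by
  rw [← Nat.card_congr (Equiv.sigmaFiberEquiv fun f : {f : α ≃ Fin (N + 1) // Monotone f} =>
    f.1.symm (Fin.last N)), Nat.card_sigma]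
  refine sum_congr rfl fun m _ => Nat.card_congr <|
    (Equiv.subtypeSubtypeEquivSubtypeInter (fun f : α ≃ Fin (N + 1) => Monotone f)
      fun f => f.symm (Fin.last N) = m).trans (Equiv.subtypeEquivRight fun f => ?_)
  rw [Equiv.symm_apply_eq, eq_comm, and_comm]

variable [DecidableEq α]

theorem monotone_equivOfApplyEqLast_iff {m : α} (hm : IsMax m)
    (f : {f : α ≃ Fin (N + 1) // f m = Fin.last N}) :
    Monotone (equivOfApplyEqLast m f) ↔ Monotone f.1 := by
  simp only [Monotone, Fin.le_iff_val_le_val, val_equivOfApplyEqLast_apply, Subtype.forall,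
    Subtype.mk_le_mk]
  refine ⟨fun h a b hab => ?_, fun h a _ b _ hab => h hab⟩
  by_cases hb : b = m
  · rw [hb, f.2]
    exact Fin.le_last _
  · have ha : a ≠ m := by
      rintro rfl
      exact hb (hm.eq_of_le hab).symm
    exact h a ha b hb hab

theorem card_apply_eq_last_monotone {m : α} (hm : IsMax m) :
    Nat.card {f : α ≃ Fin (N + 1) // f m = Fin.last N ∧ Monotone f} =
      Nat.card {g : {p // p ≠ m} ≃ Fin N // Monotone g} :=
  Nat.card_congr <|
    (Equiv.subtypeSubtypeEquivSubtypeInter _ fun f : α ≃ Fin (N + 1) => Monotone f).symm.trans <|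
    (equivOfApplyEqLast m).subtypeEquiv fun f => (monotone_equivOfApplyEqLast_iff hm f).symm

end HookLength

theorem IsForest.card_monotone_mul_prod_ncard_Iic {α : Type*} [PartialOrder α] [Fintype α]
    (hα : IsForest α) {n : ℕ} (hn : Fintype.card α = n) :
    Nat.card {f : α ≃ Fin n // Monotone f} * ∏ k : α, (Set.Iic k).ncard = n ! := by
  classical
  induction n generalizing α with
  | zero =>
    have : IsEmpty α := Fintype.card_eq_zero_iff.mp hn
    rw [Finset.univ_eq_empty, prod_empty, mul_one, factorial_zero, Nat.card_eq_one_iff_exists]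
    exact ⟨⟨Equiv.equivOfIsEmpty α _, isEmptyElim⟩,
      fun f => Subtype.ext (Equiv.ext isEmptyElim)⟩
  | succ N ih =>
    have hfiber (m : α) :
        Nat.card {f : α ≃ Fin (N + 1) // f m = Fin.last N ∧ Monotone f} *
          ∏ k : α, (Set.Iic k).ncard = if IsMax m then (Set.Iic m).ncard * N ! else 0 := by
      split_ifs with hm
      · have hhook (k : {p // p ≠ m}) : (Set.Iic (k : α)).ncard = (Set.Iic k).ncard := by
          rw [ncard_Iic_subtype_ne, Set.sdiff_singleton_eq_self (s := Set.Iic (k : α))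
            fun hmk => k.2 (hm.eq_of_le hmk).symm]
        rw [card_apply_eq_last_monotone hm, Fintype.prod_eq_mul_prod_subtype_ne _ m,
          mul_left_comm, ← ih (hα.subtype (· ≠ m)) (by simp [Fintype.card_subtype_compl, hn])]
        simp only [hhook]
      · have : IsEmpty {f : α ≃ Fin (N + 1) // f m = Fin.last N ∧ Monotone f} :=
          ⟨fun f => hm (isMax_of_monotone_of_apply_eq_last f.2.2 f.2.1)⟩
        rw [Nat.card_of_isEmpty, zero_mul]
    rw [card_monotone_eq_sum_card_apply_eq_last, sum_mul, sum_congr rfl fun m _ => hfiber m,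
      ← sum_filter, ← sum_mul, hα.sum_ncard_Iic_isMax, hn, factorial_succ]

section Merge

variable {P : Type*} [PartialOrder P] [DecidableEq P] {i j : P}

def swapSubtypeNe (i j : P) : {p : P // p ≠ j} ≃ {p : P // p ≠ i} :=
  (Equiv.swap i j).subtypeEquiv fun p => by simp [Equiv.swap_apply_eq_iff]

theorem IsForest.mergeRel_iff (hP : IsForest P) (hij : i ⋖ j) (a b : {p : P // p ≠ j}) :
    ((a : P) ≤ b ∨ ((b : P) = i ∧ (a : P) ≤ j) ∨ ((a : P) = i ∧ j ≤ (b : P))) ↔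
      (swapSubtypeNe i j a : P) ≤ swapSubtypeNe i j b := by
  obtain ⟨a, ha⟩ := a
  obtain ⟨b, hb⟩ := b
  by_cases hai : a = i <;> by_cases hbi : b = i <;>
    simp [swapSubtypeNe, Equiv.swap_apply_of_ne_of_ne, *]
  · exact fun hib => (hP.le_iff_lt_of_covBy hij).2 (lt_of_le_of_ne hib (Ne.symm hbi))
  · exact fun hai => hai.trans hij.le

theorem IsForest.card_merge_eq (hP : IsForest P) (hij : i ⋖ j) (n : ℕ) :
    Nat.card {f : {p : P // p ≠ j} ≃ Fin n //
        ∀ a b : {p : P // p ≠ j},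
          ((a : P) ≤ (b : P) ∨ ((b : P) = i ∧ (a : P) ≤ j) ∨
            ((a : P) = i ∧ j ≤ (b : P))) → f a ≤ f b} =
      Nat.card {g : {p : P // p ≠ i} ≃ Fin n // Monotone g} :=
  Nat.card_congr <| ((swapSubtypeNe i j).equivCongr (Equiv.refl _)).subtypeEquiv fun f => by
    simp only [Monotone, (swapSubtypeNe i j).forall_congr_left, hP.mergeRel_iff hij]
    simp [Equiv.equivCongr]

end Merge

section HookRatio

variable {P K : Type*} [PartialOrder P] [Field K] [CharZero K]

theorem ncard_Iic_div_ncard_Iic_sdiff_singleton_of_lt [Finite P] {i k : P} (hik : i < k) :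
    ((Set.Iic k).ncard : K) / (Set.Iic k \ {i}).ncard =
      ((Set.Iic k).ncard : K) / ((Set.Iic k).ncard - 1) := by
  rw [← Set.ncard_sdiff_singleton_add_one (s := Set.Iic k) hik.le]
  push_cast
  ring

theorem ncard_Iic_div_ncard_Iic_sdiff_singleton_of_not_le [Finite P] {i k : P} (hik : ¬i ≤ k) :
    ((Set.Iic k).ncard : K) / (Set.Iic k \ {i}).ncard = 1 := by
  rw [Set.sdiff_singleton_eq_self (s := Set.Iic k) hik, div_self]
  exact Nat.cast_ne_zero.mpr ((Set.ncard_pos (s := Set.Iic k)).mpr Set.nonempty_Iic).ne'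

theorem prod_ncard_Iic_div_ncard_Iic_sdiff_singleton [Fintype P] [DecidableEq P] (i : P) :
    ∏ k : {p // p ≠ i}, ((Set.Iic (k : P)).ncard : K) / (Set.Iic (k : P) \ {i}).ncard =
      ∏ᶠ k ∈ {k | i < k}, ((Set.Iic k).ncard : K) / ((Set.Iic k).ncard - 1) := by
  rw [finprod_mem_def, finprod_eq_prod_of_fintype, Fintype.prod_eq_mul_prod_subtype_ne _ i,
    Set.mulIndicator_of_notMem (s := {k | i < k}) (lt_irrefl i), one_mul]
  refine prod_congr rfl fun k _ => ?_
  by_cases hik : i < (k : P)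
  · rw [Set.mulIndicator_of_mem (s := {k | i < k}) hik,
      ncard_Iic_div_ncard_Iic_sdiff_singleton_of_lt hik]
  · rw [Set.mulIndicator_of_notMem (s := {k | i < k}) hik,
      ncard_Iic_div_ncard_Iic_sdiff_singleton_of_not_le
        fun hik' => hik (lt_of_le_of_ne hik' (Ne.symm k.2))]

end HookRatio

/-- For a finite forest poset `P` with a covering relation `i ⋖ j`, the ratio of the
number of linear extensions of the quotient poset `P/{i,j}` (obtained by merging `i`
and `j`; its linear extensions are modelled as bijections from `P \ {j}` to a chain
respecting the generating relations of the quotient order) to the number of linear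
extensions of `P` equals `(#P_{≤i}/#P) · Π_{k >_P i} (#P_{≤k}/(#P_{≤k} - 1))`. -/
theorem stmt15 (P : Type*) [PartialOrder P] [Fintype P]
    (hforest : ∀ p : P, ({q : P | p ⋖ q}).ncard ≤ 1)
    (i j : P) (hij : i ⋖ j) :
    (Nat.card {f : {p : P // p ≠ j} ≃ Fin (Fintype.card P - 1) //
        ∀ a b : {p : P // p ≠ j},
          ((a : P) ≤ (b : P) ∨ ((b : P) = i ∧ (a : P) ≤ j) ∨
            ((a : P) = i ∧ j ≤ (b : P))) → f a ≤ f b} : ℚ) /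
      (Nat.card {f : P ≃ Fin (Fintype.card P) // Monotone ⇑f} : ℚ) =
    (({q : P | q ≤ i}).ncard : ℚ) / (Fintype.card P : ℚ) *
      ∏ᶠ k ∈ {k : P | i < k},
        ((({q : P | q ≤ k}).ncard : ℚ) / ((({q : P | q ≤ k}).ncard : ℚ) - 1)) := by
  classical
  have hP := isForest_of_ncard_covBy_le_one hforest
  set n := Fintype.card P
  have : Nonempty P := ⟨i⟩
  have hn : n ≠ 0 := Fintype.card_ne_zero
  have hA := hP.card_monotone_mul_prod_ncard_Iic (n := n) rfl
  have hB := (hP.subtype (· ≠ i)).card_monotone_mul_prod_ncard_Iic (n := n - 1)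
    (by simp [Fintype.card_subtype_compl, n])
  rw [Fintype.prod_eq_mul_prod_subtype_ne _ i, ← mul_factorial_pred hn] at hA
  simp only [ncard_Iic_subtype_ne] at hB
  simp only [Set.Iic_def, hP.card_merge_eq hij, ← prod_ncard_Iic_div_ncard_Iic_sdiff_singleton,
    prod_div_distrib]
  qify at hA hB
  have hF : ((n - 1)! : ℚ) ≠ 0 := by positivity
  have hA0 := left_ne_zero_of_mul (hA ▸ mul_ne_zero (by positivity) hF)
  have hG0 := right_ne_zero_of_mul (hB ▸ hF)
  field_simp
  linear_combination (n : ℚ) * hB - hA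
end

section
/- For a Coxeter system (W,S) and w ∈ W, there is a bijection between the set of triples ((s_1,…,s_{ℓ(w)}), i, s) with (s_1,…,s_{ℓ(w)}) a reduced word for w, 0 ≤ i ≤ ℓ(w), and s ∈ Des(s_1 s_2 ⋯ s_i), and the set of nearly reduced words for w (0-Hecke words for w of length ℓ(w)+1); the bijection inserts s after position i. -/
/-!
A 0-Hecke word of length `ℓ(w) + 1` for `w` lengthens its Demazure product at every letter but
one. Before the stalling letter `s` the letters form a reduced word with product `v` having `s` as
a right descent; after it, lengths add up, so deleting `s` leaves a reduced word for `w`.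
Conversely, inserting a right descent `s` of the prefix product `v` into a reduced word makes the
Demazure product stall exactly once, at `s`. The insertion position is recovered as the length of
the longest reduced prefix, which makes the insertion map injective.
-/

namespace CoxeterSystem

variable {B W : Type*} [Group W] {M : CoxeterMatrix B} (cs : CoxeterSystem M W)

local prefix:100 "s " => cs.simple
local prefix:100 "π " => cs.wordProd
local prefix:100 "ℓ " => cs.length

/-- Right multiplication by `T_i` in the 0-Hecke monoid, its elements `T_v` identified with `v`. -/
noncomputable def demazureStep (v : W) (i : B) : W :=
  if ℓ v < ℓ (v * s i) then v * s i else v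

variable {cs}

theorem demazureStep_of_isRightDescent {v : W} {i : B} (h : cs.IsRightDescent v i) :
    cs.demazureStep v i = v :=
  if_neg (lt_asymm h)

theorem demazureStep_of_not_isRightDescent {v : W} {i : B} (h : ¬cs.IsRightDescent v i) :
    cs.demazureStep v i = v * s i :=
  if_pos (by rw [cs.not_isRightDescent_iff.mp h]; omega)

variable (cs)

theorem length_demazureStep_le (v : W) (i : B) : ℓ (cs.demazureStep v i) ≤ ℓ v + 1 := by
  by_cases h : cs.IsRightDescent v i
  · rw [demazureStep_of_isRightDescent h]; omega
  · rw [demazureStep_of_not_isRightDescent h, cs.not_isRightDescent_iff.mp h]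

theorem length_foldl_demazureStep_le (l : List B) (v : W) :
    ℓ (l.foldl cs.demazureStep v) ≤ ℓ v + l.length := by
  induction l generalizing v with
  | nil => simp
  | cons i l ih =>
    have := cs.length_demazureStep_le v i
    grind [ih (cs.demazureStep v i)]

theorem foldl_demazureStep_eq_of_length_eq {l : List B} {v : W}
    (h : ℓ (l.foldl cs.demazureStep v) = ℓ v + l.length) :
    l.foldl cs.demazureStep v = v * π l := by
  induction l generalizing v with
  | nil => simp
  | cons i l ih =>
    rw [List.foldl_cons] at h ⊢
    have hle := cs.length_foldl_demazureStep_le l (cs.demazureStep v i)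
    have hasc : ¬cs.IsRightDescent v i := by
      intro hdesc
      rw [demazureStep_of_isRightDescent hdesc] at h hle
      rw [List.length_cons] at h
      omega
    rw [demazureStep_of_not_isRightDescent hasc] at h ⊢
    rw [ih (by grind [cs.not_isRightDescent_iff.mp hasc]), wordProd_cons, mul_assoc]

theorem foldl_demazureStep_eq_of_length_mul_wordProd {l : List B} {v : W}
    (h : ℓ (v * π l) = ℓ v + l.length) :
    l.foldl cs.demazureStep v = v * π l := by
  induction l generalizing v with
  | nil => simp
  | cons i l ih =>
    rw [wordProd_cons, ← mul_assoc] at h ⊢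
    have hle := (cs.length_mul_le (v * s i) (π l)).trans
      (Nat.add_le_add_left (cs.length_wordProd_le l) _)
    have hasc : ¬cs.IsRightDescent v i := by
      rw [IsRightDescent]
      grind [cs.length_mul_simple v i]
    rw [List.foldl_cons, demazureStep_of_not_isRightDescent hasc,
      ih (by grind [cs.not_isRightDescent_iff.mp hasc])]

theorem foldl_demazureStep_wordProd_of_isReduced_append {p q : List B}
    (h : cs.IsReduced (p ++ q)) :
    q.foldl cs.demazureStep (π p) = π (p ++ q) := by
  rw [wordProd_append]
  apply foldl_demazureStep_eq_of_length_mul_wordProd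
  have hp : ℓ (π p) = p.length := by simpa using (h.take p.length).eq
  rw [← wordProd_append, h.eq, List.length_append, hp]

theorem foldl_demazureStep_one_of_isReduced {l : List B} (h : cs.IsReduced l) :
    l.foldl cs.demazureStep 1 = π l := by
  simpa using cs.foldl_demazureStep_wordProd_of_isReduced_append (p := []) h

theorem foldl_demazureStep_insert_descent {r : List B} {k : ℕ} {i : B} (hr : cs.IsReduced r)
    (hdesc : cs.IsRightDescent (π (r.take k)) i) :
    (r.take k ++ i :: r.drop k).foldl cs.demazureStep 1 = π r := by
  have hr' : cs.IsReduced (r.take k ++ r.drop k) := by rwa [List.take_append_drop]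
  rw [List.foldl_append, List.foldl_cons, foldl_demazureStep_one_of_isReduced cs (hr.take k),
    demazureStep_of_isRightDescent hdesc,
    foldl_demazureStep_wordProd_of_isReduced_append cs hr', List.take_append_drop]

theorem exists_insert_descent_of_foldl_demazureStep (l p : List B) (hp : cs.IsReduced p)
    (hlen : p.length + l.length = ℓ (l.foldl cs.demazureStep (π p)) + 1) :
    ∃ r k i, cs.IsReduced r ∧ π r = l.foldl cs.demazureStep (π p) ∧ k ≤ r.length ∧
      cs.IsRightDescent (π (r.take k)) i ∧ p ++ l = r.take k ++ i :: r.drop k := by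
  induction l generalizing p with
  | nil => simp [hp.eq] at hlen
  | cons i l ih =>
    rw [List.foldl_cons] at hlen ⊢
    by_cases hdesc : cs.IsRightDescent (π p) i
    · -- the Demazure product stalls at `i`; afterwards it must grow at every letter
      rw [demazureStep_of_isRightDescent hdesc] at hlen ⊢
      have hfold := foldl_demazureStep_eq_of_length_eq cs (l := l) (v := π p)
        (by grind [cs.length_foldl_demazureStep_le l (π p), hp.eq])
      refine ⟨p ++ l, p.length, i, ?_, by rw [hfold, wordProd_append], by simp, ?_, ?_⟩
      · rw [IsReduced, wordProd_append, ← hfold]; grind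
      · rwa [List.take_left]
      · rw [List.take_left, List.drop_left]
    · rw [demazureStep_of_not_isRightDescent hdesc] at hlen ⊢
      have hpi : π (p ++ [i]) = π p * s i := by simp [wordProd_append]
      have hp' : cs.IsReduced (p ++ [i]) := by
        rw [IsReduced, hpi, cs.not_isRightDescent_iff.mp hdesc, hp.eq]; simp
      obtain ⟨r, k, j, hr, hprod, hk, hdesc', hins⟩ :=
        ih (p ++ [i]) hp' (by rw [hpi]; simp at hlen ⊢; omega)
      exact ⟨r, k, j, hr, by rw [hprod, hpi], hk, hdesc', by simpa using hins⟩

theorem not_lt_of_insert_eq {r r' : List B} {k k' : ℕ} {i i' : B} (hr' : cs.IsReduced r')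
    (hk : k ≤ r.length) (hk' : k' ≤ r'.length) (hdesc : cs.IsRightDescent (π (r.take k)) i)
    (heq : r.take k ++ i :: r.drop k = r'.take k' ++ i' :: r'.drop k') :
    ¬k < k' := by
  intro hlt
  have hprefix : r.take k ++ [i] = r'.take (k + 1) := by
    have := congrArg (List.take (k + 1)) heq
    rwa [List.take_append, List.take_of_length_le (by simp), List.length_take,
      min_eq_left hk, Nat.add_sub_cancel_left, List.take_succ_cons, List.take_zero,
      List.take_append_of_le_length (by simp; omega), List.take_take,
      min_eq_left (by omega)] at this
  have hlen := (hr'.take (k + 1)).eq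
  rw [← hprefix, wordProd_append, wordProd_singleton, List.length_append,
    List.length_take, min_eq_left hk, List.length_singleton] at hlen
  have := cs.length_wordProd_le (r.take k)
  grind [IsRightDescent, List.length_take]

theorem eq_of_insert_descent_eq {r r' : List B} {k k' : ℕ} {i i' : B} (hr : cs.IsReduced r)
    (hr' : cs.IsReduced r') (hk : k ≤ r.length) (hk' : k' ≤ r'.length)
    (hdesc : cs.IsRightDescent (π (r.take k)) i) (hdesc' : cs.IsRightDescent (π (r'.take k')) i')
    (heq : r.take k ++ i :: r.drop k = r'.take k' ++ i' :: r'.drop k') :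
    r = r' ∧ k = k' ∧ i = i' := by
  obtain rfl : k = k' := le_antisymm
    (not_lt.mp (cs.not_lt_of_insert_eq hr hk' hk hdesc' heq.symm))
    (not_lt.mp (cs.not_lt_of_insert_eq hr' hk hk' hdesc heq))
  obtain ⟨htake, hcons⟩ := List.append_inj heq (by simp; omega)
  obtain ⟨rfl, hdrop⟩ := List.cons.inj hcons
  exact ⟨by rw [← List.take_append_drop k r, ← List.take_append_drop k r', htake, hdrop], rfl, rfl⟩

end CoxeterSystem

/-- For a Coxeter system `(W,S)` and `w ∈ W`, the map `((s_1,…,s_{ℓ(w)}), i, s) ↦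
(s_1,…,s_i, s, s_{i+1},…,s_{ℓ(w)})` is a bijection from the set of triples where
`(s_1,…,s_{ℓ(w)})` is a reduced word for `w`, `0 ≤ i ≤ ℓ(w)`, and `s` is a right descent
of `s_1⋯s_i` (i.e. `ℓ(s_1⋯s_i·s) < ℓ(s_1⋯s_i)`), onto the set of nearly reduced words
for `w`: the 0-Hecke words for `w` of length `ℓ(w)+1`, i.e. words whose 0-Hecke
(Demazure) product, computed by folding `v ↦ v·s` if `ℓ(vs) > ℓ(v)` else `v ↦ v`, is `w`. -/
theorem stmt17 {B W : Type*} [Group W] {M : CoxeterMatrix B}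
    (cs : CoxeterSystem M W) (w : W) :
    Set.BijOn
      (fun x : List B × ℕ × B => x.1.take x.2.1 ++ x.2.2 :: x.1.drop x.2.1)
      {x : List B × ℕ × B |
        cs.wordProd x.1 = w ∧ x.1.length = cs.length w ∧ x.2.1 ≤ cs.length w ∧
          cs.length (cs.wordProd (x.1.take x.2.1) * cs.simple x.2.2) <
            cs.length (cs.wordProd (x.1.take x.2.1))}
      {l : List B | l.length = cs.length w + 1 ∧
        l.foldl (fun v s =>
          if cs.length v < cs.length (v * cs.simple s) then v * cs.simple s else v) 1
          = w} := by
  change Set.BijOn _ _ {l : List B | _ ∧ l.foldl cs.demazureStep 1 = w}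
  refine ⟨?mapsTo, ?injOn, ?surjOn⟩
  case mapsTo =>
    rintro ⟨r, k, i⟩ ⟨rfl, hlen, hk, hdesc⟩
    dsimp only at *
    have hr : cs.IsReduced r := hlen.symm
    exact ⟨by simp; omega, cs.foldl_demazureStep_insert_descent hr hdesc⟩
  case injOn =>
    rintro ⟨r, k, i⟩ ⟨hw, hlen, hk, hdesc⟩ ⟨r', k', i'⟩ ⟨hw', hlen', hk', hdesc'⟩ heq
    dsimp only at *
    obtain ⟨rfl, rfl, rfl⟩ := cs.eq_of_insert_descent_eq
      (by rw [CoxeterSystem.IsReduced, hw, hlen]) (by rw [CoxeterSystem.IsReduced, hw', hlen'])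
      (by omega) (by omega) hdesc hdesc' heq
    rfl
  case surjOn =>
    rintro l ⟨hlen, hfold⟩
    obtain ⟨r, k, i, hr, hprod, hk, hdesc, hins⟩ :=
      cs.exists_insert_descent_of_foldl_demazureStep l [] (by simp [CoxeterSystem.IsReduced])
        (by rw [cs.wordProd_nil, hfold]; simpa using hlen)
    rw [cs.wordProd_nil, hfold] at hprod
    refine ⟨(r, k, i), ⟨hprod, ?_, ?_, hdesc⟩, hins.symm⟩ <;> grind [hr.eq]
end
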